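/- arXiv:2111.05425 — 5 statements merged into one kernel-verified Lean document; each statement's English description precedes it below -/
import Mathlib

section
/- Let G be a geometric graph, let v ∈ V(G) be a vertex, and let v₁, v₂, v₃ ∈ N(v) be vertices such that v lies in the convex hull of {v₁, v₂, v₃}. Then every edge of G not incident to v is disjoint from at least one of the edges vv₁, vv₂, vv₃. -/
open scoped Classical

noncomputable section

abbrev Pt : Type := EuclideanSpace ℝ (Fin 2)

instance : Fact (Module.finrank ℝ Pt = 2) := ⟨finrank_euclideanSpace_fin⟩

noncomputable instance : Module.Oriented ℝ Pt (Fin 2) :=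
  ⟨(EuclideanSpace.basisFun (Fin 2) ℝ).toBasis.orientation⟩

/-- A (combinatorial datum of a) geometric graph: a finite set of vertices (points of the
plane) together with a finite set of edges (unordered pairs of points). -/
structure GeomGraph where
  verts : Finset Pt
  edges : Finset (Sym2 Pt)

/-- `G` is a geometric graph: edges are non-degenerate pairs of vertices, and the vertices
are in general position (no three collinear). -/
def GeomGraph.IsGeometric (G : GeomGraph) : Prop :=
  (∀ e ∈ G.edges, ¬ e.IsDiag ∧ ∀ p ∈ e, p ∈ G.verts) ∧
  ∀ p ∈ G.verts, ∀ q ∈ G.verts, ∀ r ∈ G.verts,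
    p ≠ q → p ≠ r → q ≠ r → ¬ Collinear ℝ ({p, q, r} : Set Pt)

/-- The closed straight-line segment realizing an edge. -/
def edgeSeg (e : Sym2 Pt) : Set Pt :=
  Sym2.lift ⟨fun u v => segment ℝ u v, fun u v => segment_symm ℝ u v⟩ e

/-- Two edges are disjoint if their closed segments do not intersect. -/
def EdgesDisjoint (e f : Sym2 Pt) : Prop := edgeSeg e ∩ edgeSeg f = ∅

/-- `DJedge G e` is the set of edges of `G` disjoint from `e`. -/
def DJedge (G : GeomGraph) (e : Sym2 Pt) : Finset (Sym2 Pt) :=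
  G.edges.filter (fun f => EdgesDisjoint e f)

/-- `DJpairs G` is the set of unordered pairs of disjoint edges of `G`. -/
def DJpairs (G : GeomGraph) : Finset (Sym2 (Sym2 Pt)) :=
  G.edges.sym2.filter (fun pr => ∃ e f, pr = s(e, f) ∧ EdgesDisjoint e f)

/-- The neighborhood of a vertex. -/
def nbhd (G : GeomGraph) (v : Pt) : Finset Pt :=
  G.verts.filter (fun w => s(v, w) ∈ G.edges)

/-- The degree of a vertex. -/
def deg (G : GeomGraph) (v : Pt) : ℕ := (nbhd G v).card

/-- A geometric graph is locally convex if every vertex lies outside the convex hull of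
its neighborhood. -/
def GeomGraph.LocallyConvex (G : GeomGraph) : Prop :=
  ∀ v ∈ G.verts, v ∉ convexHull ℝ (nbhd G v : Set Pt)

/-- The oriented angle `∠ x y z ∈ (-π, π]`, measured counterclockwise from the ray `yx`
to the ray `yz`. -/
def oangle (x y z : Pt) : ℝ := (EuclideanGeometry.oangle x y z).toReal



/-- Auxiliary convexity lemma: a point expressed as a nonnegative combination (with positive
total weight) of three points of a convex set lies in the set. -/
lemma aux_conv3 {E : Type*} [AddCommGroup E] [Module ℝ E] {s : Set E} (hs : Convex ℝ s)
    {p₁ p₂ p₃ v : E} {w₁ w₂ w₃ : ℝ} (h₁ : 0 ≤ w₁) (h₂ : 0 ≤ w₂) (h₃ : 0 ≤ w₃)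
    (hW : 0 < w₁ + w₂ + w₃) (hp₁ : p₁ ∈ s) (hp₂ : p₂ ∈ s) (hp₃ : p₃ ∈ s)
    (hv : w₁ • p₁ + w₂ • p₂ + w₃ • p₃ = (w₁ + w₂ + w₃) • v) : v ∈ s := by
  have hWne : w₁ + w₂ + w₃ ≠ 0 := ne_of_gt hW
  have hveq : (w₁/(w₁+w₂+w₃)) • p₁ + (w₂/(w₁+w₂+w₃)) • p₂ + (w₃/(w₁+w₂+w₃)) • p₃ = v := by
    have h := congrArg (fun x => ((w₁+w₂+w₃)⁻¹ : ℝ) • x) hv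
    simp only [smul_add, smul_smul, inv_mul_cancel₀ hWne, one_smul] at h
    simpa only [div_eq_inv_mul] using h
  have hmem := hs.sum_mem (t := (Finset.univ : Finset (Fin 3)))
    (w := ![w₁/(w₁+w₂+w₃), w₂/(w₁+w₂+w₃), w₃/(w₁+w₂+w₃)]) (z := ![p₁, p₂, p₃])
    (by intro i _; fin_cases i <;> simp only [Matrix.cons_val_zero, Matrix.cons_val_one,
        Matrix.head_cons] <;> exact div_nonneg (by assumption) hW.le)
    (by rw [Fin.sum_univ_three]; simp only [Matrix.cons_val_zero, Matrix.cons_val_one,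
        Matrix.head_cons, Matrix.cons_val_two, Matrix.tail_cons]; field_simp)
    (by intro i _; fin_cases i <;> simpa)
  rw [Fin.sum_univ_three] at hmem
  simpa only [Matrix.cons_val_zero, Matrix.cons_val_one, Matrix.head_cons,
    Matrix.cons_val_two, Matrix.tail_cons, hveq] using hmem

/-- If a vertex `v` of a geometric graph lies in the convex hull of three of its neighbors
`v₁, v₂, v₃`, then every edge not incident to `v` is disjoint from at least one of the edges
`vv₁, vv₂, vv₃`. -/
theorem edge_disjoint_of_mem_convexHull_of_three_neighbors (G : GeomGraph)
    (hG : G.IsGeometric) (v : Pt) (hv : v ∈ G.verts) (v₁ v₂ v₃ : Pt)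
    (h₁ : v₁ ∈ nbhd G v) (h₂ : v₂ ∈ nbhd G v) (h₃ : v₃ ∈ nbhd G v)
    (hhull : v ∈ convexHull ℝ ({v₁, v₂, v₃} : Set Pt)) :
    ∀ e ∈ G.edges, v ∉ e →
      EdgesDisjoint e s(v, v₁) ∨ EdgesDisjoint e s(v, v₂) ∨ EdgesDisjoint e s(v, v₃) := by
  intro e
  induction e using Sym2.ind with
  | _ a b =>
    intro he hve
    by_contra hcon
    push_neg at hcon
    obtain ⟨hd₁, hd₂, hd₃⟩ := hcon
    have hends := hG.1 _ he
    have hab : a ≠ b := fun h => hends.1 (by simp [h])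
    have ha : a ∈ G.verts := hends.2 a (Sym2.mem_mk_left a b)
    have hb : b ∈ G.verts := hends.2 b (Sym2.mem_mk_right a b)
    have hva : v ≠ a := fun h => hve (h ▸ Sym2.mem_mk_left a b)
    have hvb : v ≠ b := fun h => hve (h ▸ Sym2.mem_mk_right a b)
    have hncol := hG.2 v hv a ha b hb hva hvb hab
    have hvseg : v ∉ segment ℝ a b := by
      intro h
      exact hncol (collinear_insert_of_mem_affineSpan_pair
        (convexHull_subset_affineSpan {a, b} (by rwa [convexHull_pair])))
    -- extract an intersection point on each of the three segments from `v`
    have extract : ∀ w : Pt, ¬ EdgesDisjoint s(a, b) s(v, w) →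
        ∃ p ∈ segment ℝ a b, ∃ t : ℝ, 0 < t ∧ t ≤ 1 ∧ v + t • (w - v) = p := by
      intro w hd
      obtain ⟨p, hpe, hps⟩ := Set.nonempty_iff_ne_empty.2 hd
      have hpe' : p ∈ segment ℝ a b := hpe
      have hps' : p ∈ segment ℝ v w := hps
      rw [segment_eq_image'] at hps'
      obtain ⟨t, ht, hpt⟩ := hps'
      refine ⟨p, hpe', t, ?_, ht.2, hpt⟩
      rcases ht.1.lt_or_eq with h | h
      · exact h
      · exfalso
        apply hvseg
        have hpv : p = v := by rw [← hpt, ← h]; simp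
        rwa [hpv] at hpe'
    obtain ⟨p₁, hp₁e, t₁, ht₁0, ht₁1, hp₁⟩ := extract v₁ hd₁
    obtain ⟨p₂, hp₂e, t₂, ht₂0, ht₂1, hp₂⟩ := extract v₂ hd₂
    obtain ⟨p₃, hp₃e, t₃, ht₃0, ht₃1, hp₃⟩ := extract v₃ hd₃
    -- convex-hull coefficients of `v`
    rw [convexHull_insert (Set.insert_nonempty _ _), mem_convexJoin] at hhull
    obtain ⟨x, hx, z, hz, hvz⟩ := hhull
    rw [Set.mem_singleton_iff] at hx
    rw [convexHull_pair] at hz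
    obtain ⟨γ, δ, hγ, hδ, hγδ, hzdef⟩ := hz
    obtain ⟨α, β, hα, hβ, hαβ, hvdef⟩ := hvz
    rw [hx] at hvdef
    have hsum : α + β * γ + β * δ = 1 := by linear_combination hαβ + β * hγδ
    have hv' : α • v₁ + (β * γ) • v₂ + (β * δ) • v₃ = v := by
      rw [← hvdef, ← hzdef, smul_add, mul_smul, mul_smul, add_assoc]
    -- the key identity: `v` is a nonneg combination of `p₁, p₂, p₃`
    have key : (α * t₂ * t₃) • p₁ + (β * γ * t₁ * t₃) • p₂ + (β * δ * t₁ * t₂) • p₃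
        = (α * t₂ * t₃ + β * γ * t₁ * t₃ + β * δ * t₁ * t₂) • v := by
      rw [← hp₁, ← hp₂, ← hp₃, ← hv']
      match_scalars
      · linear_combination (-(t₁ * t₂ * t₃) * α) * hsum
      · linear_combination (-(t₁ * t₂ * t₃) * (β * γ)) * hsum
      · linear_combination (-(t₁ * t₂ * t₃) * (β * δ)) * hsum
    have hw₁ : 0 ≤ α * t₂ * t₃ := by positivity
    have hw₂ : 0 ≤ β * γ * t₁ * t₃ := by positivity
    have hw₃ : 0 ≤ β * δ * t₁ * t₂ := by positivity
    have hW : 0 < α * t₂ * t₃ + β * γ * t₁ * t₃ + β * δ * t₁ * t₂ := by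
      have hrw : α * t₂ * t₃ + β * γ * t₁ * t₃ + β * δ * t₁ * t₂
          = α * t₂ * t₃ * (1 - t₁) + β * γ * t₁ * t₃ * (1 - t₂) + β * δ * t₁ * t₂ * (1 - t₃)
            + t₁ * t₂ * t₃ * (α + β * γ + β * δ) := by ring
      have e₁ : 0 ≤ α * t₂ * t₃ * (1 - t₁) := mul_nonneg hw₁ (by linarith)
      have e₂ : 0 ≤ β * γ * t₁ * t₃ * (1 - t₂) := mul_nonneg hw₂ (by linarith)
      have e₃ : 0 ≤ β * δ * t₁ * t₂ * (1 - t₃) := mul_nonneg hw₃ (by linarith)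
      have e₄ : 0 < t₁ * t₂ * t₃ := by positivity
      rw [hrw, hsum, mul_one]
      linarith
    exact hvseg (aux_conv3 (convex_segment a b) hw₁ hw₂ hw₃ hW hp₁e hp₂e hp₃e key)

end
end

section
/- Let G be a locally convex geometric graph in which every vertex has degree at least 2. Then Σ_{v ∈ V(G)} δ_ℓ(v) + n_ℓ ≥ 2·t_ℓ and 2·t_ℓ ≥ n_ℓ. -/
open scoped Classical

noncomputable section

/-- `ℓ` and `r` assign to each vertex `v` its leftmost and rightmost neighbors `ℓ v` and
`r v`: the oriented angle `∠ (r v) v (ℓ v)` is the maximum of `∠ a v b` over `a, b ∈ N(v)`. -/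
def IsLeftRight (G : GeomGraph) (ℓ r : Pt → Pt) : Prop :=
  ∀ v ∈ G.verts, ℓ v ∈ nbhd G v ∧ r v ∈ nbhd G v ∧
    ∀ a ∈ nbhd G v, ∀ b ∈ nbhd G v, oangle a v b ≤ oangle (r v) v (ℓ v)

/-- `δ_ℓ(v) = 1` if there is an edge `(ℓ v) x` with `∠ x (ℓ v) v > 0` and `ℓ x ≠ ℓ v`,
and `δ_ℓ(v) = 0` otherwise. -/
def deltal (G : GeomGraph) (ℓ : Pt → Pt) (v : Pt) : ℕ :=
  if ∃ x, s(ℓ v, x) ∈ G.edges ∧ 0 < oangle x (ℓ v) v ∧ ℓ x ≠ ℓ v then 1 else 0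

/-- `δ_r(v) = 1` if there is an edge `(r v) x` with `∠ x (r v) v < 0` and `r x ≠ r v`,
and `δ_r(v) = 0` otherwise. -/
def deltar (G : GeomGraph) (r : Pt → Pt) (v : Pt) : ℕ :=
  if ∃ x, s(r v, x) ∈ G.edges ∧ oangle x (r v) v < 0 ∧ r x ≠ r v then 1 else 0

/-- `n_ℓ`: the number of vertices `v` such that `ℓ w = v` for every `w ∈ N(v)`. -/
def nl (G : GeomGraph) (ℓ : Pt → Pt) : ℕ :=
  (G.verts.filter (fun v => ∀ w ∈ nbhd G v, ℓ w = v)).card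

/-- `n_r`: the number of vertices `v` such that `r w = v` for every `w ∈ N(v)`. -/
def nr (G : GeomGraph) (r : Pt → Pt) : ℕ :=
  (G.verts.filter (fun v => ∀ w ∈ nbhd G v, r w = v)).card

/-- `t_ℓ`: the number of double leftmost edges, i.e. edges `uv` with `ℓ u = v` and `ℓ v = u`. -/
def tl (G : GeomGraph) (ℓ : Pt → Pt) : ℕ :=
  (G.edges.filter (fun e => ∃ u v, e = s(u, v) ∧ ℓ u = v ∧ ℓ v = u)).card


/-! ### Auxiliary lemmas -/

local notation "ωPt" => Orientation.areaForm
  (Module.Oriented.positiveOrientation : Orientation ℝ Pt (Fin 2))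
local notation "oaPt" => Orientation.oangle
  (Module.Oriented.positiveOrientation : Orientation ℝ Pt (Fin 2))

lemma areaForm_coords (x y : Pt) : ωPt x y = x 0 * y 1 - x 1 * y 0 := by
  have h := Orientation.volumeForm_robust
    (o := (Module.Oriented.positiveOrientation : Orientation ℝ Pt (Fin 2)))
    (EuclideanSpace.basisFun (Fin 2) ℝ) rfl
  rw [Orientation.areaForm_to_volumeForm, h, Module.Basis.det_apply, Matrix.det_fin_two]
  simp [Module.Basis.toMatrix_apply]
  ring

lemma cross_identity (p q r : Pt) (f : Pt →L[ℝ] ℝ) :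
    ωPt q r * f p - ωPt p r * f q + ωPt p q * f r = 0 := by
  have hv : (ωPt q r) • p - (ωPt p r) • q + (ωPt p q) • r = (0 : Pt) := by
    ext i
    fin_cases i <;> simp [areaForm_coords] <;> ring
  have := congrArg f hv
  simpa [map_add, map_sub, map_smul] using this

lemma oangle_toReal_neg_iff (x y : Pt) : (oaPt x y).toReal < 0 ↔ ωPt x y < 0 := by
  have harg : (oaPt x y).toReal = Complex.arg
      ((Module.Oriented.positiveOrientation : Orientation ℝ Pt (Fin 2)).kahler x y) := by
    rw [Orientation.oangle]
    exact Real.Angle.toReal_coe_eq_self_iff.2 ⟨Complex.neg_pi_lt_arg _, Complex.arg_le_pi _⟩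
  rw [harg, Complex.arg_neg_iff]
  simp [Orientation.kahler_apply_apply, Complex.add_im, Complex.smul_im]

lemma oangle_toReal_of_areaForm_zero (x y : Pt) (h : ωPt x y = 0) :
    (oaPt x y).toReal = 0 ∨ (oaPt x y).toReal = Real.pi := by
  have harg : (oaPt x y).toReal = Complex.arg
      ((Module.Oriented.positiveOrientation : Orientation ℝ Pt (Fin 2)).kahler x y) := by
    rw [Orientation.oangle]
    exact Real.Angle.toReal_coe_eq_self_iff.2 ⟨Complex.neg_pi_lt_arg _, Complex.arg_le_pi _⟩
  have him : ((Module.Oriented.positiveOrientation :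
      Orientation ℝ Pt (Fin 2)).kahler x y).im = 0 := by
    simp [Orientation.kahler_apply_apply, Complex.add_im, Complex.smul_im, h]
  set z := (Module.Oriented.positiveOrientation : Orientation ℝ Pt (Fin 2)).kahler x y with hz
  have hzre : z = (z.re : ℂ) := Complex.ext rfl (by simpa using him)
  rcases le_or_gt 0 z.re with hre | hre
  · left; rw [harg, hzre]; exact Complex.arg_ofReal_of_nonneg hre
  · right; rw [harg, hzre]; exact Complex.arg_ofReal_of_neg hre

lemma oangle_points (p q w : Pt) :
    EuclideanGeometry.oangle p w q = oaPt (p - w) (q - w) := rfl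

lemma mem_nbhd_facts (G : GeomGraph) (hG : G.IsGeometric) {u w : Pt} (h : w ∈ nbhd G u) :
    w ∈ G.verts ∧ s(u, w) ∈ G.edges ∧ w ≠ u := by
  rw [nbhd, Finset.mem_filter] at h
  refine ⟨h.1, h.2, ?_⟩
  intro hwu
  have := (hG.1 _ h.2).1
  rw [hwu] at this
  exact this (by simp [Sym2.mk_isDiag_iff])

/-- The key geometric fact: for a locally convex geometric graph, every neighbor `x ≠ ℓ u`
of `u` satisfies `∠ x u (ℓ u) > 0`. -/
lemma pos_oangle (G : GeomGraph) (hG : G.IsGeometric) (hconv : G.LocallyConvex)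
    (ℓ r : Pt → Pt) (hlr : IsLeftRight G ℓ r) (u : Pt) (hu : u ∈ G.verts)
    (x : Pt) (hx : x ∈ nbhd G u) (hxm : x ≠ ℓ u) : 0 < oangle x u (ℓ u) := by
  obtain ⟨hm, ha, hmax⟩ := hlr u hu
  obtain ⟨hmW, hmE, hmu⟩ := mem_nbhd_facts G hG hm
  obtain ⟨haW, haE, hau⟩ := mem_nbhd_facts G hG ha
  obtain ⟨hxW, hxE, hxu⟩ := mem_nbhd_facts G hG hx
  have hπ := Real.pi_pos
  -- the maximal angle is nonnegative
  have h0 : 0 ≤ oangle (r u) u (ℓ u) := by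
    have h := hmax (ℓ u) hm (ℓ u) hm
    have : oangle (ℓ u) u (ℓ u) = 0 := by
      rw [oangle, EuclideanGeometry.oangle_self_left_right, Real.Angle.toReal_zero]
    linarith
  by_contra hcon
  push_neg at hcon
  -- x, u, ℓ u are not collinear
  have hncol : ¬ Collinear ℝ ({x, u, ℓ u} : Set Pt) :=
    hG.2 x hxW u hu (ℓ u) hmW hxu hxm hmu.symm
  have hne : EuclideanGeometry.oangle x u (ℓ u) ≠ 0 ∧
      EuclideanGeometry.oangle x u (ℓ u) ≠ Real.pi := by
    constructor <;> intro h <;>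
      exact hncol (EuclideanGeometry.oangle_eq_zero_or_eq_pi_iff_collinear.1 (by tauto))
  have htB0 : oangle x u (ℓ u) ≠ 0 := by
    rw [oangle]; rw [Ne, Real.Angle.toReal_eq_zero_iff]; exact hne.1
  have htB : oangle x u (ℓ u) < 0 := lt_of_le_of_ne hcon htB0
  -- angle addition
  have hadd : EuclideanGeometry.oangle (r u) u x + EuclideanGeometry.oangle x u (ℓ u) =
      EuclideanGeometry.oangle (r u) u (ℓ u) :=
    EuclideanGeometry.oangle_add hau hxu hmu
  have hcoe : ((oangle (r u) u x + oangle x u (ℓ u) : ℝ) : Real.Angle) =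
      ((oangle (r u) u (ℓ u) : ℝ) : Real.Angle) := by
    rw [Real.Angle.coe_add]
    simp only [oangle, Real.Angle.coe_toReal]
    exact hadd
  obtain ⟨k, hk⟩ := Real.Angle.angle_eq_iff_two_pi_dvd_sub.1 hcoe
  -- bounds on the three angles
  have hbA1 : oangle (r u) u x ≤ Real.pi := Real.Angle.toReal_le_pi _
  have hbA2 : -Real.pi < oangle (r u) u x := Real.Angle.neg_pi_lt_toReal _
  have hbB2 : -Real.pi < oangle x u (ℓ u) := Real.Angle.neg_pi_lt_toReal _
  have hbT1 : oangle (r u) u (ℓ u) ≤ Real.pi := Real.Angle.toReal_le_pi _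
  have hAle : oangle (r u) u x ≤ oangle (r u) u (ℓ u) := hmax (r u) ha x hx
  -- k = 0 or k = -1
  have hk0 : k ≤ 0 := by
    by_contra h
    push_neg at h
    have : (1 : ℝ) ≤ (k : ℝ) := by exact_mod_cast h
    nlinarith
  have hk1 : -1 ≤ k := by
    by_contra h
    push_neg at h
    have h2 : k ≤ -2 := by omega
    have : (k : ℝ) ≤ -2 := by exact_mod_cast h2
    nlinarith
  have hkcases : k = 0 ∨ k = -1 := by omega
  rcases hkcases with hk' | hk'
  · rw [hk'] at hk
    push_cast at hk
    linarith
  · rw [hk'] at hk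
    push_cast at hk
    -- wrap-around case: derive a contradiction via the half-plane
    have htA : oangle (r u) u x < 0 := by linarith
    have hT0 : 0 < oangle (r u) u (ℓ u) := by linarith
    have hTpi : oangle (r u) u (ℓ u) < Real.pi := by
      rcases eq_or_ne (r u) (ℓ u) with ham | ham
      · exfalso
        have : oangle (r u) u (ℓ u) = 0 := by
          rw [ham, oangle, EuclideanGeometry.oangle_self_left_right, Real.Angle.toReal_zero]
        linarith
      · have hncol2 : ¬ Collinear ℝ ({r u, u, ℓ u} : Set Pt) :=
          hG.2 (r u) haW u hu (ℓ u) hmW hau ham hmu.symm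
        have hne2 : EuclideanGeometry.oangle (r u) u (ℓ u) ≠ Real.pi := by
          intro h
          exact hncol2 (EuclideanGeometry.oangle_eq_zero_or_eq_pi_iff_collinear.1 (Or.inr h))
        have := lt_of_le_of_ne hbT1 (by rw [oangle, Ne, Real.Angle.toReal_eq_pi_iff]; exact hne2)
        exact this
    -- translate to areaForm signs
    have hω1 : ωPt (r u - u) (x - u) < 0 := by
      have := (oangle_toReal_neg_iff (r u - u) (x - u)).1
      rw [← oangle_points] at this
      exact this htA
    have hω2 : ωPt (x - u) (ℓ u - u) < 0 := by
      have := (oangle_toReal_neg_iff (x - u) (ℓ u - u)).1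
      rw [← oangle_points] at this
      exact this htB
    have hω3 : 0 < ωPt (r u - u) (ℓ u - u) := by
      rcases lt_trichotomy (ωPt (r u - u) (ℓ u - u)) 0 with h | h | h
      · exfalso
        have := (oangle_toReal_neg_iff (r u - u) (ℓ u - u)).2 h
        rw [← oangle_points] at this
        have h' : oangle (r u) u (ℓ u) < 0 := this
        linarith
      · exfalso
        have := oangle_toReal_of_areaForm_zero (r u - u) (ℓ u - u) h
        rw [← oangle_points] at this
        have this : oangle (r u) u (ℓ u) = 0 ∨ oangle (r u) u (ℓ u) = Real.pi := this
        rcases this with h' | h' <;> rw [h'] at hT0 hTpi <;> linarith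
      · exact h
    -- half-plane от local convexity
    have hcv := hconv u hu
    obtain ⟨f, c, hfu, hfs⟩ := geometric_hahn_banach_point_closed
      (convex_convexHull ℝ (nbhd G u : Set Pt)) ((Finset.finite_toSet (nbhd G u)).isClosed_convexHull ℝ) hcv
    have hfpos : ∀ w ∈ nbhd G u, 0 < f (w - u) := by
      intro w hw
      have hwh : w ∈ convexHull ℝ (nbhd G u : Set Pt) :=
        subset_convexHull ℝ _ (Finset.mem_coe.2 hw)
      have := hfs w hwh
      rw [map_sub]
      linarith
    have hid := cross_identity (r u - u) (x - u) (ℓ u - u) f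
    have t1 := mul_neg_of_neg_of_pos hω2 (hfpos (r u) ha)
    have t2 := mul_pos hω3 (hfpos x hx)
    have t3 := mul_neg_of_neg_of_pos hω1 (hfpos (ℓ u) hm)
    linarith

/-- Membership extraction for double-leftmost edges. -/
lemma dl_extract (ℓ : Pt → Pt) {v : Pt}
    (h : ∃ a b, s(v, ℓ v) = s(a, b) ∧ ℓ a = b ∧ ℓ b = a) : ℓ (ℓ v) = v := by
  obtain ⟨a, b, he, h1, h2⟩ := h
  rw [Sym2.eq_iff] at he
  rcases he with ⟨rfl, rfl⟩ | ⟨rfl, rfl⟩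
  · exact h2
  · rw [h2]; rw [h2] at h1; exact h1

/-- **Inequality (10).** For a locally convex geometric graph with minimum degree at least 2:
`Σ_v δ_ℓ(v) + n_ℓ ≥ 2 t_ℓ` and `2 t_ℓ ≥ n_ℓ`. -/
theorem sum_deltal_add_nl_ge_two_tl (G : GeomGraph) (hG : G.IsGeometric)
    (hconv : G.LocallyConvex) (hdeg : ∀ v ∈ G.verts, 2 ≤ deg G v)
    (ℓ r : Pt → Pt) (hlr : IsLeftRight G ℓ r) :
    2 * tl G ℓ ≤ (∑ v ∈ G.verts, deltal G ℓ v) + nl G ℓ ∧ nl G ℓ ≤ 2 * tl G ℓ := by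
  classical
  set P : Sym2 Pt → Prop := fun e => ∃ u v, e = s(u, v) ∧ ℓ u = v ∧ ℓ v = u with hP
  set D : Finset (Sym2 Pt) := G.edges.filter P with hD
  set Q : Finset Pt := G.verts.filter (fun v => s(v, ℓ v) ∈ D) with hQdef
  have hQD : ∀ v ∈ Q, ℓ (ℓ v) = v ∧ s(v, ℓ v) ∈ G.edges := by
    intro v hv
    rw [hQdef, Finset.mem_filter] at hv
    have hm := hv.2
    rw [hD, Finset.mem_filter] at hm
    obtain ⟨he, hp⟩ := hm
    refine ⟨?_, he⟩
    obtain ⟨a, b, hab, h1, h2⟩ := hp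
    exact dl_extract ℓ ⟨a, b, hab, h1, h2⟩
  -- |Q| = 2 * tl
  have hQcard : Q.card = 2 * tl G ℓ := by
    have hfib : ∀ v ∈ Q, s(v, ℓ v) ∈ D := by
      intro v hv
      rw [hQdef, Finset.mem_filter] at hv
      exact hv.2
    rw [Finset.card_eq_sum_card_fiberwise hfib]
    have hconst : ∀ e ∈ D, (Q.filter (fun v => s(v, ℓ v) = e)).card = 2 := by
      intro e he
      have heD := he
      rw [hD, Finset.mem_filter] at heD
      obtain ⟨heE, a, b, rfl, h1, h2⟩ := heD
      have hab : a ≠ b := by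
        intro h
        exact (hG.1 _ heE).1 (by rw [h]; simp [Sym2.mk_isDiag_iff])
      have haV : a ∈ G.verts := (hG.1 _ heE).2 a (Sym2.mem_mk_left a b)
      have hbV : b ∈ G.verts := (hG.1 _ heE).2 b (Sym2.mem_mk_right a b)
      have hset : Q.filter (fun v => s(v, ℓ v) = s(a, b)) = {a, b} := by
        ext w
        simp only [Finset.mem_filter, Finset.mem_insert, Finset.mem_singleton]
        constructor
        · rintro ⟨-, hw⟩
          rw [Sym2.eq_iff] at hw
          rcases hw with ⟨h, -⟩ | ⟨h, -⟩
          · exact Or.inl h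
          · exact Or.inr h
        · rintro (rfl | rfl)
          · refine ⟨?_, by rw [h1]⟩
            rw [hQdef, Finset.mem_filter]
            exact ⟨haV, by rw [h1]; exact he⟩
          · refine ⟨?_, by rw [h2, Sym2.eq_swap]⟩
            rw [hQdef, Finset.mem_filter]
            exact ⟨hbV, by rw [h2, Sym2.eq_swap]; exact he⟩
      rw [hset, Finset.card_insert_of_notMem (by simpa using hab), Finset.card_singleton]
    rw [Finset.sum_congr rfl hconst, Finset.sum_const, smul_eq_mul, tl]
    ring_nf
    rfl
  -- the n_ℓ set is contained in Q
  have hnlQ : G.verts.filter (fun v => ∀ w ∈ nbhd G v, ℓ w = v) ⊆ Q := by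
    intro v hv
    rw [Finset.mem_filter] at hv
    obtain ⟨hvV, hall⟩ := hv
    obtain ⟨hm, -, -⟩ := hlr v hvV
    have hmE : s(v, ℓ v) ∈ G.edges := by
      rw [nbhd, Finset.mem_filter] at hm
      exact hm.2
    rw [hQdef, Finset.mem_filter]
    refine ⟨hvV, ?_⟩
    rw [hD, Finset.mem_filter]
    exact ⟨hmE, v, ℓ v, rfl, rfl, hall (ℓ v) hm⟩
  constructor
  · -- 2 * tl ≤ Σ δ + nl
    rw [← hQcard]
    set pr : Pt → Prop :=
      fun v => ∃ x, s(ℓ v, x) ∈ G.edges ∧ 0 < oangle x (ℓ v) v ∧ ℓ x ≠ ℓ v with hpr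
    have hsplit : (Q.filter pr).card + (Q.filter (fun v => ¬ pr v)).card = Q.card :=
      Finset.card_filter_add_card_filter_not _
    have h1 : (Q.filter pr).card ≤ ∑ v ∈ G.verts, deltal G ℓ v := by
      have hsub : Q.filter pr ⊆ G.verts := by
        intro v hv
        rw [Finset.mem_filter, hQdef, Finset.mem_filter] at hv
        exact hv.1.1
      calc (Q.filter pr).card = ∑ v ∈ Q.filter pr, deltal G ℓ v := by
            rw [Finset.card_eq_sum_ones]
            refine Finset.sum_congr rfl ?_
            intro v hv
            rw [Finset.mem_filter] at hv
            rw [deltal, if_pos hv.2]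
        _ ≤ ∑ v ∈ G.verts, deltal G ℓ v :=
            Finset.sum_le_sum_of_subset_of_nonneg hsub (fun _ _ _ => Nat.zero_le _)
    have h2 : (Q.filter (fun v => ¬ pr v)).card ≤ nl G ℓ := by
      rw [nl]
      apply Finset.card_le_card_of_injOn ℓ
      · -- maps into the n_ℓ set
        intro v hv
        rw [Finset.mem_coe, Finset.mem_filter] at hv
        obtain ⟨hvQ, hnpr⟩ := hv
        obtain ⟨hll, hE⟩ := hQD v hvQ
        have hvV : v ∈ G.verts := by
          rw [hQdef, Finset.mem_filter] at hvQ; exact hvQ.1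
        have huV : ℓ v ∈ G.verts := (hG.1 _ hE).2 (ℓ v) (Sym2.mem_mk_right v (ℓ v))
        rw [Finset.mem_coe, Finset.mem_filter]
        refine ⟨huV, ?_⟩
        intro w hw
        rcases eq_or_ne w v with rfl | hwv
        · rfl
        · have hwE : s(ℓ v, w) ∈ G.edges := by
            rw [nbhd, Finset.mem_filter] at hw
            exact hw.2
          have hpos : 0 < oangle w (ℓ v) v := by
            have := pos_oangle G hG hconv ℓ r hlr (ℓ v) huV w hw (by rw [hll]; exact hwv)
            rw [hll] at this
            exact this
          by_contra hne
          exact hnpr ⟨w, hwE, hpos, hne⟩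
      · -- injective
        intro v1 h1' v2 h2' heq
        have e1 := (hQD v1 (Finset.mem_of_mem_filter _ (by exact_mod_cast h1'))).1
        have e2 := (hQD v2 (Finset.mem_of_mem_filter _ (by exact_mod_cast h2'))).1
        rw [← e1, heq, e2]
    omega
  · rw [← hQcard]
    exact Finset.card_le_card hnlQ

end
end

section
/- Let G be a locally convex geometric graph and let v ∈ V(G) be a vertex of degree at least 2 with leftmost edge vℓ_v and rightmost edge vr_v. If w, t ∈ N(v)\{ℓ_v, r_v} are two distinct neighbors of v with wt ∈ E(G), then the edge wt is disjoint from both vℓ_v and vr_v. -/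
open scoped Classical

noncomputable section

section Aux

open Module.Oriented

local notation "o" => (Module.Oriented.positiveOrientation : Orientation ℝ Pt (Fin 2))

/-- If a linear functional vanishes on `e - v` and is negative on `w - v` and `t - v`,
then the segments `[w,t]` and `[v,e]` are disjoint. -/
private lemma seg_disjoint_of_linear (g : Pt →ₗ[ℝ] ℝ) (v e w t : Pt)
    (hgw : g (w - v) < 0) (hgt : g (t - v) < 0) (hge : g (e - v) = 0) :
    segment ℝ w t ∩ segment ℝ v e = ∅ := by
  rw [Set.eq_empty_iff_forall_notMem]
  rintro p ⟨hp1, hp2⟩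
  obtain ⟨a, b, ha, hb, hab, hp⟩ := hp1
  obtain ⟨c, d, hc, hd, hcd, hq⟩ := hp2
  have h1 : p - v = a • (w - v) + b • (t - v) := by
    have h : a • (w - v) + b • (t - v) = (a • w + b • t) - (a + b) • v := by module
    rw [h, hab, hp, one_smul]
  have h2 : p - v = d • (e - v) := by
    have h : d • (e - v) = (c • v + d • e) - (c + d) • v := by module
    rw [h, hcd, hq, one_smul]
  have hgp1 : g (p - v) < 0 := by
    rw [h1, map_add, map_smul, map_smul, smul_eq_mul, smul_eq_mul]
    rcases eq_or_lt_of_le ha with h | h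
    · have hb1 : b = 1 := by linarith
      rw [← h, hb1]; simpa using hgt
    · have hx : a * g (w - v) < 0 := mul_neg_of_pos_of_neg h hgw
      have hy : b * g (t - v) ≤ 0 := mul_nonpos_of_nonneg_of_nonpos hb hgt.le
      linarith
  rw [h2, map_smul, smul_eq_mul, hge, mul_zero] at hgp1
  exact lt_irrefl 0 hgp1

private lemma im_kahler (x y : Pt) : ((o).kahler x y).im = (o).areaForm x y := by
  simp [Orientation.kahler_apply_apply]

private lemma areaForm_neg_of_toReal_neg {x y : Pt} (h : ((o).oangle x y).toReal < 0) :
    (o).areaForm x y < 0 := by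
  rw [Orientation.oangle, Complex.arg_coe_angle_toReal_eq_arg] at h
  rw [← im_kahler]
  exact Complex.arg_neg_iff.1 h

private lemma areaForm_pos_of_toReal_pos {x y : Pt} (h : 0 < ((o).oangle x y).toReal)
    (hpi : (o).oangle x y ≠ (Real.pi : Real.Angle)) : 0 < (o).areaForm x y := by
  have h' := h
  rw [Orientation.oangle, Complex.arg_coe_angle_toReal_eq_arg] at h
  rw [← im_kahler]
  rcases lt_trichotomy ((o).kahler x y).im 0 with hlt | heq | hgt
  · exact absurd (Complex.arg_neg_iff.2 hlt) (by linarith)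
  · exfalso
    rcases le_or_gt 0 ((o).kahler x y).re with hre | hre
    · have : Complex.arg ((o).kahler x y) = 0 := Complex.arg_eq_zero_iff.2 ⟨hre, heq⟩
      linarith [this ▸ h]
    · have : Complex.arg ((o).kahler x y) = Real.pi := Complex.arg_eq_pi_iff.2 ⟨hre, heq⟩
      exact hpi (by rw [Orientation.oangle, this])
  · exact hgt

end Aux

/-- **Lemma 1, Case 4.** Let `v` be a vertex of degree at least 2 of a locally convex
geometric graph, with leftmost edge `v ℓv` and rightmost edge `v rv`. If `w, t` are two
distinct neighbors of `v` other than `ℓv, rv` with `wt ∈ E(G)`, then the edge `wt` is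
disjoint from both `v ℓv` and `v rv`. -/
theorem edge_between_inner_neighbors_disjoint (G : GeomGraph) (hG : G.IsGeometric)
    (hconv : G.LocallyConvex) (v : Pt) (hv : v ∈ G.verts) (hdeg : 2 ≤ deg G v)
    (ℓv rv : Pt) (hℓ : ℓv ∈ nbhd G v) (hr : rv ∈ nbhd G v)
    (hmax : ∀ a ∈ nbhd G v, ∀ b ∈ nbhd G v, oangle a v b ≤ oangle rv v ℓv)
    (w t : Pt) (hw : w ∈ nbhd G v \ {ℓv, rv}) (ht : t ∈ nbhd G v \ {ℓv, rv})
    (hwt : w ≠ t) (hedge : s(w, t) ∈ G.edges) :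
    EdgesDisjoint s(w, t) s(v, ℓv) ∧ EdgesDisjoint s(w, t) s(v, rv) := by
  classical
  obtain ⟨hG1, hG2⟩ := hG
  -- basic membership facts
  have hmemN : ∀ x ∈ nbhd G v, x ∈ G.verts ∧ s(v, x) ∈ G.edges := by
    intro x hx
    exact ⟨(Finset.mem_filter.1 hx).1, (Finset.mem_filter.1 hx).2⟩
  have hne_v : ∀ x ∈ nbhd G v, x ≠ v := by
    intro x hx h
    have hd := (hG1 _ (hmemN x hx).2).1
    apply hd
    rw [h]
    simp [Sym2.mk_isDiag_iff]
  obtain ⟨hwN, hw2⟩ := Finset.mem_sdiff.1 hw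
  obtain ⟨htN, ht2⟩ := Finset.mem_sdiff.1 ht
  have hwℓ : w ≠ ℓv := fun h => hw2 (by simp [h])
  have hwr : w ≠ rv := fun h => hw2 (by simp [h])
  have htℓ : t ≠ ℓv := fun h => ht2 (by simp [h])
  have htr : t ≠ rv := fun h => ht2 (by simp [h])
  -- separating functional
  obtain ⟨f, u, hfa, hfv⟩ := _root_.geometric_hahn_banach_closed_point
    (convex_convexHull ℝ ((nbhd G v : Finset Pt) : Set Pt))
    (((nbhd G v : Finset Pt) : Set Pt).toFinite.isClosed_convexHull (𝕜 := ℝ)) (hconv v hv)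
  set n : Pt := -((InnerProductSpace.toDual ℝ Pt).symm f) with hn
  have hinner : ∀ x ∈ nbhd G v, (0 : ℝ) < inner ℝ n (x - v) := by
    intro x hx
    have h1 : f x < u := hfa x (subset_convexHull ℝ _ (Finset.mem_coe.2 hx))
    have h3 : (inner ℝ ((InnerProductSpace.toDual ℝ Pt).symm f) (x - v) : ℝ) = f (x - v) :=
      InnerProductSpace.toDual_symm_apply
    have h4 : (inner ℝ n (x - v) : ℝ) = -(f (x - v)) := by
      rw [hn, inner_neg_left, h3]
    rw [h4, map_sub]
    linarith
  have hn0 : n ≠ 0 := by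
    intro h
    have := hinner w hwN
    rw [h, inner_zero_left] at this
    exact lt_irrefl 0 this
  set o : Orientation ℝ Pt (Fin 2) := Module.Oriented.positiveOrientation with ho
  have hoang : ∀ a b : Pt, EuclideanGeometry.oangle a v b = o.oangle (a - v) (b - v) := by
    intro a b
    rw [EuclideanGeometry.oangle, vsub_eq_sub, vsub_eq_sub]
  set θ : Pt → ℝ := fun x => (o.oangle n (x - v)).toReal with hθ
  have hhalf : ∀ x ∈ nbhd G v, |θ x| < Real.pi / 2 := by
    intro x hx
    have hdx : x - v ≠ 0 := sub_ne_zero.2 (hne_v x hx)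
    have hiq := hinner x hx
    have hangle : InnerProductGeometry.angle n (x - v) < Real.pi / 2 := by
      by_contra hcon
      push_neg at hcon
      have hle : InnerProductGeometry.angle n (x - v) ≤ Real.pi + Real.pi / 2 :=
        le_trans (InnerProductGeometry.angle_le_pi _ _) (by linarith [Real.pi_pos])
      have hcos : Real.cos (InnerProductGeometry.angle n (x - v)) ≤ 0 :=
        Real.cos_nonpos_of_pi_div_two_le_of_le hcon hle
      rw [InnerProductGeometry.cos_angle] at hcos
      have hpos : (0 : ℝ) < ‖n‖ * ‖x - v‖ :=
        mul_pos (norm_pos_iff.2 hn0) (norm_pos_iff.2 hdx)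
      have := div_pos hiq hpos
      linarith
    calc |θ x| = InnerProductGeometry.angle n (x - v) :=
          (o.angle_eq_abs_oangle_toReal hn0 hdx).symm
      _ < Real.pi / 2 := hangle
  have hdiff : ∀ a ∈ nbhd G v, ∀ b ∈ nbhd G v,
      (o.oangle (a - v) (b - v)).toReal = θ b - θ a := by
    intro a ha b hb
    have hda : a - v ≠ 0 := sub_ne_zero.2 (hne_v a ha)
    have hdb : b - v ≠ 0 := sub_ne_zero.2 (hne_v b hb)
    have h1 : o.oangle (a - v) (b - v) = o.oangle (a - v) n + o.oangle n (b - v) :=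
      (o.oangle_add hda hn0 hdb).symm
    have h2 : o.oangle (a - v) n = -o.oangle n (a - v) := o.oangle_rev _ _
    have h3 : o.oangle (a - v) (b - v) = ((θ b - θ a : ℝ) : Real.Angle) := by
      rw [h1, h2, ← Real.Angle.coe_toReal (o.oangle n (a - v)),
        ← Real.Angle.coe_toReal (o.oangle n (b - v)), ← Real.Angle.coe_neg,
        ← Real.Angle.coe_add]
      congr 1
      ring
    rw [h3]
    have haa := hhalf a ha
    have hbb := hhalf b hb
    rw [abs_lt] at haa hbb
    exact Real.Angle.toReal_coe_eq_self_iff.2 ⟨by linarith, by linarith [Real.pi_pos]⟩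
  have hdiff' : ∀ a ∈ nbhd G v, ∀ b ∈ nbhd G v, oangle a v b = θ b - θ a := by
    intro a ha b hb
    rw [oangle, hoang]
    exact hdiff a ha b hb
  have hub : ∀ x ∈ nbhd G v, θ x ≤ θ ℓv := by
    intro x hx
    have h := hmax rv hr x hx
    rw [hdiff' rv hr x hx, hdiff' rv hr ℓv hℓ] at h
    linarith
  have hlb : ∀ x ∈ nbhd G v, θ rv ≤ θ x := by
    intro x hx
    have h := hmax x hx ℓv hℓ
    rw [hdiff' x hx ℓv hℓ, hdiff' rv hr ℓv hℓ] at h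
    linarith
  have hncol : ∀ x ∈ nbhd G v, ∀ y ∈ nbhd G v, x ≠ y →
      ¬ Collinear ℝ ({x, v, y} : Set Pt) := by
    intro x hx y hy hxy
    exact hG2 x (hmemN x hx).1 v hv y (hmemN y hy).1 (hne_v x hx) hxy (hne_v y hy).symm
  have hkey : ∀ x ∈ nbhd G v, x ≠ ℓv → x ≠ rv →
      o.areaForm (ℓv - v) (x - v) < 0 ∧ 0 < o.areaForm (rv - v) (x - v) := by
    intro x hx hxℓ hxr
    have hltℓ : θ x < θ ℓv := by
      refine lt_of_le_of_ne (hub x hx) ?_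
      intro h
      have h0 : (o.oangle (ℓv - v) (x - v)).toReal = 0 := by
        rw [hdiff ℓv hℓ x hx, h, sub_self]
      have h0' : EuclideanGeometry.oangle ℓv v x = 0 := by
        rw [hoang]
        exact Real.Angle.toReal_eq_zero_iff.1 h0
      exact hncol ℓv hℓ x hx (Ne.symm hxℓ)
        (EuclideanGeometry.oangle_eq_zero_or_eq_pi_iff_collinear.1 (Or.inl h0'))
    have hgtr : θ rv < θ x := by
      refine lt_of_le_of_ne (hlb x hx) ?_
      intro h
      have h0 : (o.oangle (rv - v) (x - v)).toReal = 0 := by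
        rw [hdiff rv hr x hx, ← h, sub_self]
      have h0' : EuclideanGeometry.oangle rv v x = 0 := by
        rw [hoang]
        exact Real.Angle.toReal_eq_zero_iff.1 h0
      exact hncol rv hr x hx (Ne.symm hxr)
        (EuclideanGeometry.oangle_eq_zero_or_eq_pi_iff_collinear.1 (Or.inl h0'))
    constructor
    · apply areaForm_neg_of_toReal_neg
      rw [hdiff ℓv hℓ x hx]
      linarith
    · have hpi : o.oangle (rv - v) (x - v) ≠ Real.pi := by
        intro h
        have : EuclideanGeometry.oangle rv v x = Real.pi := by rw [hoang]; exact h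
        exact hncol rv hr x hx (Ne.symm hxr)
          (EuclideanGeometry.oangle_eq_zero_or_eq_pi_iff_collinear.1 (Or.inr this))
      apply areaForm_pos_of_toReal_pos _ hpi
      rw [hdiff rv hr x hx]
      linarith
  obtain ⟨hkw1, hkw2⟩ := hkey w hwN hwℓ hwr
  obtain ⟨hkt1, hkt2⟩ := hkey t htN htℓ htr
  constructor
  · show edgeSeg s(w, t) ∩ edgeSeg s(v, ℓv) = ∅
    have e1 : edgeSeg s(w, t) = segment ℝ w t := rfl
    have e2 : edgeSeg s(v, ℓv) = segment ℝ v ℓv := rfl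
    rw [e1, e2]
    exact seg_disjoint_of_linear (o.areaForm (ℓv - v)) v ℓv w t hkw1 hkt1
      (o.areaForm_apply_self _)
  · show edgeSeg s(w, t) ∩ edgeSeg s(v, rv) = ∅
    have e1 : edgeSeg s(w, t) = segment ℝ w t := rfl
    have e2 : edgeSeg s(v, rv) = segment ℝ v rv := rfl
    rw [e1, e2]
    refine seg_disjoint_of_linear (-(o.areaForm (rv - v))) v rv w t ?_ ?_ ?_
    · rw [LinearMap.neg_apply]
      linarith
    · rw [LinearMap.neg_apply]
      linarith
    · rw [LinearMap.neg_apply, o.areaForm_apply_self, neg_zero]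


end
end

section
/- For integers n and k of different parity with n − 2 > k > 2, the graph G_{n,k} satisfies |DJ(G_{n,k})| = (n/2)·C(k+2,3), where C(k+2,3) is the binomial coefficient. -/
open scoped Classical

noncomputable section

/-- The `i`-th vertex of a regular `n`-gon inscribed in the unit circle. -/
def gonPt (n : ℕ) (i : ℕ) : Pt :=
  (WithLp.equiv 2 (Fin 2 → ℝ)).symm
    ![Real.cos (2 * Real.pi * i / n), Real.sin (2 * Real.pi * i / n)]

/-- The convex geometric graph `G_{n,k}`: its vertices `x_0, …, x_{n-1}` are the vertices of
a regular `n`-gon in cyclic order, and its edges are the pairs `x_i x_j` with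
`j - i ≡ d (mod n)` for some `d ∈ {(n-k-1)/2, …, (n+k+1)/2}`. -/
def Gnk (n k : ℕ) : GeomGraph where
  verts := (Finset.range n).image (gonPt n)
  edges := (((Finset.range n) ×ˢ (Finset.range n)).filter
      (fun p => (n - k - 1) / 2 ≤ (p.2 + n - p.1) % n ∧
        (p.2 + n - p.1) % n ≤ (n + k + 1) / 2)).image
      (fun p => s(gonPt n p.1, gonPt n p.2))


/-!
Two chords of a convex polygon without a common endpoint are disjoint exactly when they do not
cross, that is, when one of them lies in one of the two arcs cut off by the other. The edges of
`G_{n,k}` are the chords of cyclic length between `m = (n - k - 1) / 2` and `n - m`. So an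
ordered pair `(e, f)` of disjoint edges is the same as an orientation `x_a → x_{a+d}` of `e`
together with an edge `f = x_{a+u} x_{a+v}` with `0 < u < v < d`, and then `v - u ≥ m`. Putting
`u = x + 1`, `v = m + y` and `d = m + z` turns these data into a vertex `x_a` and a triple
`x < y < z < n - 2m + 1 = k + 2`. Hence there are `n·C(k+2,3)` ordered pairs, and half as many
unordered ones.

Crossing and nesting are decided by the functional `⟪x_μ, ·⟫` at the mid-angle `μ` of a chord:
it is constant on the chord, larger on the arc the chord cuts off, and smaller on the rest of
the circle.
-/

open Real Module Finset

def increasingPairs (N : ℕ) : Finset (ℕ × ℕ) := (range N ×ˢ range N).filter fun p => p.1 < p.2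

def increasingTriples (N : ℕ) : Finset (ℕ × ℕ × ℕ) :=
  (range N ×ˢ range N ×ˢ range N).filter fun t => t.1 < t.2.1 ∧ t.2.1 < t.2.2

lemma card_increasingPairs (N : ℕ) : #(increasingPairs N) = N.choose 2 := by
  induction N with
  | zero => rfl
  | succ N ih =>
    have : increasingPairs (N + 1) = increasingPairs N ∪ (range N).image fun x => (x, N) := by
      ext ⟨x, y⟩
      simp [increasingPairs]
      omega
    rw [this, card_union_of_disjoint, ih, card_image_of_injective _ fun _ _ h => (Prod.mk.inj h).1,
      card_range, Nat.choose_succ_succ', Nat.choose_one_right, add_comm]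
    simp only [disjoint_left, increasingPairs, mem_filter, mem_product, mem_range, mem_image]
    rintro _ ⟨⟨-, h⟩, -⟩ ⟨x, -, rfl⟩
    exact lt_irrefl _ h

lemma card_increasingTriples (N : ℕ) : #(increasingTriples N) = N.choose 3 := by
  induction N with
  | zero => rfl
  | succ N ih =>
    have : increasingTriples (N + 1) =
        increasingTriples N ∪ (increasingPairs N).image fun p => (p.1, p.2, N) := by
      ext ⟨x, y, z⟩
      simp [increasingTriples, increasingPairs]
      omega
    rw [this, card_union_of_disjoint, ih, card_image_of_injective _ fun p q h => by
      simp only [Prod.mk.injEq] at h; exact Prod.ext h.1 h.2.1, card_increasingPairs,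
      Nat.choose_succ_succ' N 2, add_comm]
    simp only [disjoint_left, increasingTriples, increasingPairs, mem_filter, mem_product,
      mem_range, mem_image]
    rintro _ ⟨⟨-, -, h⟩, -⟩ ⟨p, -, rfl⟩
    exact lt_irrefl _ h

theorem two_mul_card_filter_sym2 {α : Type*} (t : Finset α) {r : α → α → Prop}
    (hr : ∀ a b, r a b → r b a) (hirr : ∀ a, ¬ r a a) :
    2 * #(t.sym2.filter fun z => ∃ a b, z = s(a, b) ∧ r a b) =
      #((t ×ˢ t).filter fun p => r p.1 p.2) := by
  rw [card_eq_sum_card_fiberwise (f := fun p : α × α => s(p.1, p.2))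
    (t := t.sym2.filter fun z => ∃ a b, z = s(a, b) ∧ r a b), mul_comm, ← smul_eq_mul, ← sum_const]
  · refine sum_congr rfl fun z hz => ?_
    obtain ⟨-, a, b, rfl, hab⟩ := mem_filter.1 hz
    have ht := mem_sym2_iff.1 (mem_filter.1 hz).1
    have hfiber : ((t ×ˢ t).filter fun p => r p.1 p.2).filter (fun p => s(p.1, p.2) = s(a, b)) =
        {(a, b), (b, a)} := by
      ext ⟨x, y⟩
      simp only [mem_filter, mem_product, mem_insert, mem_singleton, Sym2.eq_iff, Prod.mk.injEq]
      constructor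
      · rintro ⟨-, h⟩; exact h
      · rintro (⟨rfl, rfl⟩ | ⟨rfl, rfl⟩)
        · exact ⟨⟨⟨ht _ (by simp), ht _ (by simp)⟩, hab⟩, Or.inl ⟨rfl, rfl⟩⟩
        · exact ⟨⟨⟨ht _ (by simp), ht _ (by simp)⟩, hr _ _ hab⟩, Or.inr ⟨rfl, rfl⟩⟩
    rw [hfiber, card_pair]
    intro h
    obtain ⟨rfl, -⟩ := Prod.mk.inj h
    exact hirr _ hab
  · rintro ⟨a, b⟩ hp
    obtain ⟨hab, h⟩ := mem_filter.1 hp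
    exact mem_filter.2 ⟨mk_mem_sym2_iff.2 (mem_product.1 hab), a, b, rfl, h⟩

theorem segment_inter_nonempty_of_separated {V : Type*} [AddCommGroup V] [Module ℝ V]
    [FiniteDimensional ℝ V] (hV : finrank ℝ V = 2) (ℓ₁ ℓ₂ : V →ₗ[ℝ] ℝ) {a b p q : V}
    {c₁ c₂ : ℝ} (ha : ℓ₁ a = c₁) (hb : ℓ₁ b = c₁) (hp : c₁ < ℓ₁ p) (hq : ℓ₁ q < c₁)
    (hp' : ℓ₂ p = c₂) (hq' : ℓ₂ q = c₂) (ha' : ℓ₂ a < c₂) (hb' : c₂ < ℓ₂ b) :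
    (segment ℝ a b ∩ segment ℝ p q).Nonempty := by
  have hpq : 0 < ℓ₁ p - ℓ₁ q := by linarith
  obtain ⟨t, ht0, ht1, hℓ₁z⟩ : ∃ t : ℝ, 0 ≤ t ∧ t ≤ 1 ∧ (1 - t) * ℓ₁ p + t * ℓ₁ q = c₁ :=
    ⟨(ℓ₁ p - c₁) / (ℓ₁ p - ℓ₁ q), div_nonneg (by linarith) hpq.le,
      (div_le_one hpq).2 (by linarith), by field_simp; ring⟩
  set z := (1 - t) • p + t • q
  have hℓ₂z : ℓ₂ z = c₂ := by
    simp only [z, map_add, map_smul, smul_eq_mul, hp', hq']; ring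
  -- in the plane, the level set `ℓ₁ = c₁` is the line through `a` and `b`
  have hker : finrank ℝ (LinearMap.ker ℓ₁) = 1 := by
    have := Module.Dual.finrank_ker_add_one_of_ne_zero (f := ℓ₁) (by
      rintro rfl; simp at hp hq; linarith)
    omega
  have hba : (⟨b - a, by simp [ha, hb]⟩ : LinearMap.ker ℓ₁) ≠ 0 := by
    intro h
    have : b = a := sub_eq_zero.1 (congrArg Subtype.val h)
    rw [this] at hb'; linarith
  obtain ⟨s, hs⟩ := (finrank_eq_one_iff_of_nonzero' _ hba).1 hker
    ⟨z - a, by simp [z, ha, hℓ₁z]⟩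
  have hz : z = (1 - s) • a + s • b := by
    have := congrArg Subtype.val hs
    simp only [SetLike.mk_smul_mk] at this
    rw [eq_sub_iff_add_eq] at this
    rw [← this]; module
  have hs₂ : (1 - s) * ℓ₂ a + s * ℓ₂ b = c₂ := by
    simpa [hz] using hℓ₂z
  refine ⟨z, ⟨1 - s, s, ?_, ?_, by ring, hz.symm⟩, ⟨1 - t, t, by linarith, ht0, by ring, rfl⟩⟩
  · nlinarith
  · nlinarith

def circlePt (θ : ℝ) : Pt := (WithLp.equiv 2 (Fin 2 → ℝ)).symm ![cos θ, sin θ]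

lemma gonPt_eq_circlePt (n i : ℕ) : gonPt n i = circlePt (2 * π * i / n) := rfl

lemma circlePt_add_two_pi (θ : ℝ) : circlePt (θ + 2 * π) = circlePt θ := by
  simp [circlePt]

lemma circlePt_eq_circlePt_iff {α β : ℝ} : circlePt α = circlePt β ↔ (α : Angle) = β := by
  constructor
  · intro h
    apply Angle.cos_sin_inj
    · simpa [circlePt] using congrArg (· 0) h
    · simpa [circlePt] using congrArg (· 1) h
  · intro h
    have hcos := congrArg Angle.cos h
    have hsin := congrArg Angle.sin h
    simp only [Angle.cos_coe, Angle.sin_coe] at hcos hsin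
    simp [circlePt, hcos, hsin]

lemma inner_circlePt (μ θ : ℝ) : inner ℝ (circlePt μ) (circlePt θ) = cos (θ - μ) := by
  simp [circlePt, PiLp.inner_apply, Fin.sum_univ_two, cos_sub]

lemma cos_lt_cos_of_abs_lt {δ x : ℝ} (hδ : δ ≤ π) (hx : |x| < δ) : cos δ < cos x := by
  rw [← cos_abs x]
  exact cos_lt_cos_of_nonneg_of_le_pi (abs_nonneg x) hδ hx

lemma cos_lt_cos_of_lt_of_lt_two_pi_sub {δ x : ℝ} (hδ : 0 ≤ δ) (h₁ : δ < x)
    (h₂ : x < 2 * π - δ) : cos x < cos δ := by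
  rcases le_total x π with hx | hx
  · exact cos_lt_cos_of_nonneg_of_le_pi hδ hx h₁
  · rw [← cos_two_pi_sub]
    exact cos_lt_cos_of_nonneg_of_le_pi hδ (by linarith) (by linarith)

section Arc

variable {α β θ : ℝ}

lemma inner_circlePt_left :
    inner ℝ (circlePt ((α + β) / 2)) (circlePt α) = cos ((β - α) / 2) := by
  rw [inner_circlePt, ← cos_neg]; ring_nf

lemma inner_circlePt_right :
    inner ℝ (circlePt ((α + β) / 2)) (circlePt β) = cos ((β - α) / 2) := by
  rw [inner_circlePt]; ring_nf

lemma cos_lt_inner_circlePt (hβ : β < α + 2 * π) (h₁ : α < θ) (h₂ : θ < β) :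
    cos ((β - α) / 2) < inner ℝ (circlePt ((α + β) / 2)) (circlePt θ) := by
  rw [inner_circlePt]
  exact cos_lt_cos_of_abs_lt (by linarith) (abs_lt.2 ⟨by linarith, by linarith⟩)

lemma inner_circlePt_lt_cos (hαβ : α < β) (h₁ : β < θ) (h₂ : θ < α + 2 * π) :
    inner ℝ (circlePt ((α + β) / 2)) (circlePt θ) < cos ((β - α) / 2) := by
  rw [inner_circlePt]
  exact cos_lt_cos_of_lt_of_lt_two_pi_sub (by linarith) (by linarith) (by linarith)

lemma segment_circlePt_subset :
    segment ℝ (circlePt α) (circlePt β) ⊆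
      {x | inner ℝ (circlePt ((α + β) / 2)) x = cos ((β - α) / 2)} := by
  rintro _ ⟨s, t, -, -, hst, rfl⟩
  simp [inner_add_right, inner_smul_right, inner_circlePt_left, inner_circlePt_right,
    ← add_mul, hst]

end Arc

theorem disjoint_segment_circlePt_of_nested {α β γ δ : ℝ} (h₁ : α < γ) (h₂ : γ ≤ δ)
    (h₃ : δ < β) (h₄ : β < α + 2 * π) :
    Disjoint (segment ℝ (circlePt α) (circlePt β)) (segment ℝ (circlePt γ) (circlePt δ)) := by
  have hinner : segment ℝ (circlePt γ) (circlePt δ) ⊆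
      {x | cos ((β - α) / 2) < inner ℝ (circlePt ((α + β) / 2)) x} :=
    (convex_halfSpace_gt (innerₛₗ ℝ _).isLinear _).segment_subset
      (cos_lt_inner_circlePt h₄ h₁ (by linarith)) (cos_lt_inner_circlePt h₄ (by linarith) h₃)
  exact Set.disjoint_left.2 fun x hx hx' => (hinner hx').ne' (segment_circlePt_subset hx)

theorem segment_circlePt_inter_nonempty_of_crossing {α β γ δ : ℝ} (h₁ : α < γ) (h₂ : γ < β)
    (h₃ : β < δ) (h₄ : δ < α + 2 * π) :
    (segment ℝ (circlePt α) (circlePt β) ∩ segment ℝ (circlePt γ) (circlePt δ)).Nonempty := by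
  refine segment_inter_nonempty_of_separated finrank_euclideanSpace_fin
    (innerₛₗ ℝ (circlePt ((α + β) / 2))) (innerₛₗ ℝ (circlePt ((γ + δ) / 2)))
    (c₁ := cos ((β - α) / 2)) (c₂ := cos ((δ - γ) / 2)) ?_ ?_ ?_ ?_ ?_ ?_ ?_ ?_ <;>
    simp only [innerₛₗ_apply_apply]
  · exact inner_circlePt_left
  · exact inner_circlePt_right
  · exact cos_lt_inner_circlePt (by linarith) h₁ h₂
  · exact inner_circlePt_lt_cos (by linarith) h₃ h₄
  · exact inner_circlePt_left
  · exact inner_circlePt_right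
  · rw [← circlePt_add_two_pi α]
    exact inner_circlePt_lt_cos (by linarith) (by linarith) (by linarith)
  · exact cos_lt_inner_circlePt (by linarith) h₂ h₃

lemma mem_edgeSeg_of_mem {e : Sym2 Pt} {x : Pt} (h : x ∈ e) : x ∈ edgeSeg e := by
  induction e using Sym2.ind with
  | h u v =>
    rcases Sym2.mem_iff.1 h with rfl | rfl
    exacts [left_mem_segment ℝ _ _, right_mem_segment ℝ _ _]

lemma not_edgesDisjoint_of_mem {e f : Sym2 Pt} {x : Pt} (he : x ∈ e) (hf : x ∈ f) :
    ¬ EdgesDisjoint e f := fun h =>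
  (Set.eq_empty_iff_forall_notMem.1 h x) ⟨mem_edgeSeg_of_mem he, mem_edgeSeg_of_mem hf⟩

lemma not_edgesDisjoint_self (e : Sym2 Pt) : ¬ EdgesDisjoint e e := by
  induction e using Sym2.ind with
  | h u v => exact not_edgesDisjoint_of_mem (Sym2.mem_mk_left u v) (Sym2.mem_mk_left u v)

lemma EdgesDisjoint.symm {e f : Sym2 Pt} (h : EdgesDisjoint e f) : EdgesDisjoint f e := by
  rwa [EdgesDisjoint, Set.inter_comm]

def disjointEdgePairs (E : Finset (Sym2 Pt)) : Finset (Sym2 Pt × Sym2 Pt) :=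
  (E ×ˢ E).filter fun p => EdgesDisjoint p.1 p.2

theorem two_mul_card_DJpairs (G : GeomGraph) :
    2 * #(DJpairs G) = #(disjointEdgePairs G.edges) :=
  two_mul_card_filter_sym2 G.edges (fun _ _ h => h.symm) not_edgesDisjoint_self

lemma eq_of_natCast_eq_of_lt {n x y : ℕ} (h : (x : ZMod n) = y) (hx : x < n) (hy : y < n) :
    x = y :=
  ((ZMod.natCast_eq_natCast_iff _ _ _).1 h).eq_of_lt_of_lt hx hy

section Polygon

variable {n : ℕ}

lemma gonPt_eq_gonPt_iff (hn : 0 < n) {i j : ℕ} :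
    gonPt n i = gonPt n j ↔ (i : ZMod n) = j := by
  have hn' : (n : ℝ) ≠ 0 := by positivity
  rw [← Int.cast_natCast, ← Int.cast_natCast (R := ZMod n) j,
    ZMod.intCast_eq_intCast_iff_dvd_sub, gonPt_eq_circlePt, gonPt_eq_circlePt,
    circlePt_eq_circlePt_iff, Angle.angle_eq_iff_two_pi_dvd_sub]
  constructor
  · rintro ⟨t, ht⟩
    refine ⟨-t, ?_⟩
    have : (i : ℝ) - j = t * n := by
      field_simp at ht; nlinarith [pi_pos]
    have : ((j - i : ℤ) : ℝ) = ((n * -t : ℤ) : ℝ) := by push_cast; linarith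
    exact_mod_cast this
  · rintro ⟨t, ht⟩
    refine ⟨-t, ?_⟩
    have : (j : ℝ) - i = n * t := by exact_mod_cast ht
    push_cast
    field_simp
    linear_combination -this

lemma two_pi_mul_div_lt (hn : 0 < n) {x y : ℕ} (h : x < y) :
    2 * π * x / n < 2 * π * y / n := by
  gcongr

lemma two_pi_mul_div_lt_add_two_pi (hn : 0 < n) {x y : ℕ} (h : y < x + n) :
    2 * π * y / n < 2 * π * x / n + 2 * π := by
  have : 2 * π * x / n + 2 * π = 2 * π * (x + n : ℕ) / n := by push_cast; field_simp
  rw [this]; gcongr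

lemma edgesDisjoint_gonPt_of_nested (hn : 0 < n) (a : ℕ) {u v d : ℕ} (hu : 0 < u)
    (huv : u < v) (hvd : v < d) (hdn : d < n) :
    EdgesDisjoint s(gonPt n a, gonPt n (a + d)) s(gonPt n (a + u), gonPt n (a + v)) :=
  Set.disjoint_iff_inter_eq_empty.1 <| disjoint_segment_circlePt_of_nested
    (two_pi_mul_div_lt hn (by omega : a < a + u))
    (two_pi_mul_div_lt hn (by omega : a + u < a + v)).le
    (two_pi_mul_div_lt hn (by omega : a + v < a + d))
    (two_pi_mul_div_lt_add_two_pi hn (by omega : a + d < a + n))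

lemma not_edgesDisjoint_gonPt_of_crossing (hn : 0 < n) (a : ℕ) {u v d : ℕ} (hu : 0 < u)
    (hud : u < d) (hdv : d < v) (hvn : v < n) :
    ¬ EdgesDisjoint s(gonPt n a, gonPt n (a + d)) s(gonPt n (a + u), gonPt n (a + v)) :=
  (segment_circlePt_inter_nonempty_of_crossing
    (two_pi_mul_div_lt hn (by omega : a < a + u))
    (two_pi_mul_div_lt hn (by omega : a + u < a + d))
    (two_pi_mul_div_lt hn (by omega : a + d < a + v))
    (two_pi_mul_div_lt_add_two_pi hn (by omega : a + v < a + n))).ne_empty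

lemma exists_gonPt_eq_add (hn : 0 < n) (a b : ℕ) : ∃ u < n, gonPt n b = gonPt n (a + u) := by
  have : NeZero n := NeZero.of_pos hn
  refine ⟨((b : ZMod n) - a).val, ZMod.val_lt _, (gonPt_eq_gonPt_iff hn).2 ?_⟩
  rw [Nat.cast_add, ZMod.natCast_zmod_val]
  ring

def polygonChords (n m : ℕ) : Finset (Sym2 Pt) :=
  (range n ×ˢ Icc m (n - m)).image fun p => s(gonPt n p.1, gonPt n (p.1 + p.2))

lemma mem_polygonChords {m : ℕ} {e : Sym2 Pt} : e ∈ polygonChords n m ↔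
    ∃ a < n, ∃ d, m ≤ d ∧ d ≤ n - m ∧ e = s(gonPt n a, gonPt n (a + d)) := by
  simp [polygonChords, eq_comm, and_assoc]

lemma mk_mem_polygonChords (hn : 0 < n) (a : ℕ) {m d : ℕ} (hd : m ≤ d) (hd' : d ≤ n - m) :
    s(gonPt n a, gonPt n (a + d)) ∈ polygonChords n m := by
  refine mem_polygonChords.2 ⟨a % n, Nat.mod_lt _ hn, d, hd, hd', ?_⟩
  congr 1 <;> apply (gonPt_eq_gonPt_iff hn).2 <;> push_cast [ZMod.natCast_mod] <;> rfl

lemma Gnk_edges_eq_polygonChords {k : ℕ} (hn : k + 2 < n) (hp : n % 2 ≠ k % 2) :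
    (Gnk n k).edges = polygonChords n ((n - k - 1) / 2) := by
  ext e
  simp only [Gnk, mem_image, mem_filter, mem_product, mem_range, Prod.exists, mem_polygonChords]
  constructor
  · rintro ⟨i, j, ⟨⟨hi, -⟩, hlo, hhi⟩, rfl⟩
    refine ⟨i, hi, (j + n - i) % n, hlo, by omega, ?_⟩
    congr 1
    apply (gonPt_eq_gonPt_iff (by omega)).2
    push_cast [ZMod.natCast_mod, Nat.cast_sub (by omega : i ≤ j + n), ZMod.natCast_self]
    ring
  · rintro ⟨a, ha, d, hlo, hhi, rfl⟩
    refine ⟨a, (a + d) % n, ⟨⟨ha, Nat.mod_lt _ (by omega)⟩, ?_⟩, ?_⟩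
    · have : ((a + d) % n + n - a) % n = d := by
        refine eq_of_natCast_eq_of_lt ?_ (Nat.mod_lt _ (by omega)) (by omega)
        push_cast [ZMod.natCast_mod, Nat.cast_sub (by omega : a ≤ (a + d) % n + n),
          ZMod.natCast_self]
        ring
      omega
    · congr 1
      apply (gonPt_eq_gonPt_iff (by omega)).2
      push_cast [ZMod.natCast_mod]
      rfl

lemma sub_mem_Icc_of_mk_mem_polygonChords (hn : 0 < n) {m : ℕ} (hm : 0 < m) {a u v : ℕ}
    (huv : u ≤ v) (hv : v < n) (h : s(gonPt n (a + u), gonPt n (a + v)) ∈ polygonChords n m) :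
    v - u ∈ Set.Icc m (n - m) := by
  obtain ⟨b, -, g, hg, hg', h⟩ := mem_polygonChords.1 h
  rw [Sym2.eq_iff] at h
  simp only [gonPt_eq_gonPt_iff hn, Nat.cast_add] at h
  rcases h with ⟨h₁, h₂⟩ | ⟨h₁, h₂⟩
  · have : v - u = g := eq_of_natCast_eq_of_lt (n := n) (by
      rw [Nat.cast_sub huv]; linear_combination h₂ - h₁) (by omega) (by omega)
    exact ⟨by omega, by omega⟩
  · have : v - u = n - g := eq_of_natCast_eq_of_lt (n := n) (by
      rw [Nat.cast_sub huv, Nat.cast_sub (by omega : g ≤ n), ZMod.natCast_self]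
      linear_combination h₂ - h₁) (by omega) (by omega)
    exact ⟨by omega, by omega⟩

lemma eq_of_nested_chords_eq (hn : 0 < n) {a a' u u' v v' d d' : ℕ} (ha : a < n)
    (ha' : a' < n) (huv : u < v) (hvd : v < d) (hd : d < n) (huv' : u' < v') (hvd' : v' < d')
    (hd' : d' < n) (h₁ : s(gonPt n a, gonPt n (a + d)) = s(gonPt n a', gonPt n (a' + d')))
    (h₂ : s(gonPt n (a + u), gonPt n (a + v)) = s(gonPt n (a' + u'), gonPt n (a' + v'))) :
    a = a' ∧ u = u' ∧ v = v' ∧ d = d' := by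
  rw [Sym2.eq_iff] at h₁ h₂
  simp only [gonPt_eq_gonPt_iff hn, Nat.cast_add] at h₁ h₂
  rcases h₁ with ⟨h₁, h₁'⟩ | ⟨h₁, h₁'⟩
  · obtain rfl : a = a' := eq_of_natCast_eq_of_lt h₁ ha ha'
    obtain rfl : d = d' := eq_of_natCast_eq_of_lt (by linear_combination h₁') hd hd'
    rcases h₂ with ⟨h₂, h₂'⟩ | ⟨h₂, h₂'⟩
    · exact ⟨rfl, eq_of_natCast_eq_of_lt (by linear_combination h₂) (by omega) (by omega),
        eq_of_natCast_eq_of_lt (by linear_combination h₂') (by omega) (by omega), rfl⟩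
    · have : u = v' := eq_of_natCast_eq_of_lt (by linear_combination h₂) (by omega) (by omega)
      have : v = u' := eq_of_natCast_eq_of_lt (by linear_combination h₂') (by omega) (by omega)
      omega
  · -- the same outer chord with opposite orientations: `d + d' = n`, and the inner chords
    -- lie in the two different arcs
    have hdd : d = n - d' := eq_of_natCast_eq_of_lt (by
      rw [Nat.cast_sub hd'.le, ZMod.natCast_self]; linear_combination h₁' - h₁) hd (by omega)
    rcases h₂ with ⟨h₂, -⟩ | ⟨h₂, -⟩
    · have : u = d + u' := eq_of_natCast_eq_of_lt (by push_cast; linear_combination h₂ - h₁')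
        (by omega) (by omega)
      omega
    · have : u = d + v' := eq_of_natCast_eq_of_lt (by push_cast; linear_combination h₂ - h₁')
        (by omega) (by omega)
      omega

lemma exists_nested_of_edgesDisjoint (hn : 0 < n) {m : ℕ} (hm : 0 < m) {e f : Sym2 Pt}
    (he : e ∈ polygonChords n m) (hf : f ∈ polygonChords n m) (hef : EdgesDisjoint e f) :
    ∃ a < n, ∃ u v d, 0 < u ∧ u + m ≤ v ∧ v < d ∧ m ≤ d ∧ d ≤ n - m ∧
      e = s(gonPt n a, gonPt n (a + d)) ∧ f = s(gonPt n (a + u), gonPt n (a + v)) := by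
  obtain ⟨a, ha, d, hd, hd', rfl⟩ := mem_polygonChords.1 he
  obtain ⟨b, -, g, -, -, rfl⟩ := mem_polygonChords.1 hf
  obtain ⟨u, hu, hbu⟩ := exists_gonPt_eq_add hn a b
  obtain ⟨v, hv, hbv⟩ := exists_gonPt_eq_add hn a (b + g)
  rw [hbu, hbv] at hf hef ⊢
  clear hbu hbv
  wlog huv : u ≤ v generalizing u v
  · rw [Sym2.eq_swap (a := gonPt n (a + u))] at hf hef ⊢
    exact this v hv u hef hf hu (by omega)
  obtain ⟨hlen, hlen'⟩ := sub_mem_Icc_of_mk_mem_polygonChords hn hm huv hv hf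
  have hu0 : u ≠ 0 := by
    rintro rfl
    exact not_edgesDisjoint_of_mem (x := gonPt n a) (by simp) (by simp) hef
  have hud : u ≠ d := by
    rintro rfl
    exact not_edgesDisjoint_of_mem (x := gonPt n (a + u)) (by simp) (by simp) hef
  have hvd : v ≠ d := by
    rintro rfl
    exact not_edgesDisjoint_of_mem (x := gonPt n (a + v)) (by simp) (by simp) hef
  rcases lt_or_gt_of_ne hvd with hvd | hvd
  · exact ⟨a, ha, u, v, d, by omega, by omega, hvd, hd, hd', rfl, rfl⟩
  rcases lt_or_gt_of_ne hud with hud | hud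
  · exact absurd hef (not_edgesDisjoint_gonPt_of_crossing hn a (by omega) hud hvd hv)
  -- `f` lies in the arc from `x_{a+d}` on to `x_{a+n}`: orient `e` the other way round
  refine ⟨(a + d) % n, Nat.mod_lt _ hn, u - d, v - d, n - d, by omega, by omega, by omega,
    by omega, by omega, ?_, ?_⟩
  · rw [Sym2.eq_swap]
    congr 1 <;> apply (gonPt_eq_gonPt_iff hn).2 <;>
      push_cast [ZMod.natCast_mod, Nat.cast_sub (by omega : d ≤ n), ZMod.natCast_self] <;> ring
  · congr 1 <;> apply (gonPt_eq_gonPt_iff hn).2 <;>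
      push_cast [ZMod.natCast_mod, Nat.cast_sub hud.le, Nat.cast_sub hvd.le] <;> ring

/-- The outer chord runs from `x_a` over `d = m + z` steps, the inner one from `x_{a+u}` to
`x_{a+v}` with `u = x + 1` and `v = m + y`: then `x < y < z` says exactly `0 < u`, `u + m ≤ v`
and `v < d`. -/
def nestedChordPair (n m : ℕ) (q : ℕ × ℕ × ℕ × ℕ) : Sym2 Pt × Sym2 Pt :=
  (s(gonPt n q.1, gonPt n (q.1 + (m + q.2.2.2))),
    s(gonPt n (q.1 + (q.2.1 + 1)), gonPt n (q.1 + (m + q.2.2.1))))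

lemma mapsTo_nestedChordPair (hn : 0 < n) {m : ℕ} (hm : 0 < m) :
    Set.MapsTo (nestedChordPair n m) (range n ×ˢ increasingTriples (n - 2 * m + 1) : Finset _)
      (disjointEdgePairs (polygonChords n m)) := by
  rintro ⟨a, x, y, z⟩ hq
  simp only [mem_coe, mem_product, mem_range, increasingTriples, mem_filter] at hq
  have hinner := mk_mem_polygonChords hn (a + (x + 1)) (m := m) (d := m + y - (x + 1))
    (by omega) (by omega)
  rw [show a + (x + 1) + (m + y - (x + 1)) = a + (m + y) by omega] at hinner
  simp only [nestedChordPair, mem_coe]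
  exact mem_filter.2 ⟨mem_product.2 ⟨mk_mem_polygonChords hn a (by omega) (by omega), hinner⟩,
    edgesDisjoint_gonPt_of_nested hn a (by omega) (by omega) (by omega) (by omega)⟩

lemma injOn_nestedChordPair (hn : 0 < n) {m : ℕ} (hm : 0 < m) :
    Set.InjOn (nestedChordPair n m) (range n ×ˢ increasingTriples (n - 2 * m + 1) : Finset _) := by
  rintro ⟨a, x, y, z⟩ hq ⟨a', x', y', z'⟩ hq' h
  simp only [mem_coe, mem_product, mem_range, increasingTriples, mem_filter] at hq hq'
  simp only [nestedChordPair, Prod.mk.injEq] at h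
  have := eq_of_nested_chords_eq hn hq.1 hq'.1 (by omega) (by omega) (by omega) (by omega)
    (by omega) (by omega) h.1 h.2
  simp only [Prod.mk.injEq]
  omega

lemma surjOn_nestedChordPair (hn : 0 < n) {m : ℕ} (hm : 0 < m) :
    Set.SurjOn (nestedChordPair n m) (range n ×ˢ increasingTriples (n - 2 * m + 1) : Finset _)
      (disjointEdgePairs (polygonChords n m)) := by
  rintro ⟨e, f⟩ hef
  obtain ⟨hef, hdisj⟩ := mem_filter.1 hef
  obtain ⟨he, hf⟩ := mem_product.1 hef
  obtain ⟨a, ha, u, v, d, hu, huv, hvd, hd, hd', rfl, rfl⟩ :=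
    exists_nested_of_edgesDisjoint hn hm he hf hdisj
  refine ⟨(a, u - 1, v - m, d - m), ?_, ?_⟩
  · simp only [mem_coe, mem_product, mem_range, increasingTriples, mem_filter]
    omega
  · simp only [nestedChordPair, show m + (d - m) = d by omega, show u - 1 + 1 = u by omega,
      show m + (v - m) = v by omega]

theorem card_disjointEdgePairs_polygonChords (hn : 0 < n) {m : ℕ} (hm : 0 < m) :
    #(disjointEdgePairs (polygonChords n m)) = n * (n - 2 * m + 1).choose 3 := by
  rw [← card_nbij _ (mapsTo_nestedChordPair hn hm) (injOn_nestedChordPair hn hm)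
    (surjOn_nestedChordPair hn hm), card_product, card_range, card_increasingTriples]

end Polygon

theorem Gnk_card_DJpairs_general (n k : ℕ) (hn : k + 2 < n) (hp : n % 2 ≠ k % 2) :
    ((DJpairs (Gnk n k)).card : ℝ) = n / 2 * ((k + 2).choose 3) := by
  have h := two_mul_card_DJpairs (Gnk n k)
  rw [Gnk_edges_eq_polygonChords hn hp,
    card_disjointEdgePairs_polygonChords (by omega) (by omega),
    show n - 2 * ((n - k - 1) / 2) + 1 = k + 2 by omega] at h
  have h' : (2 * #(DJpairs (Gnk n k)) : ℝ) = n * (k + 2).choose 3 := by exact_mod_cast h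
  linear_combination h' / 2

/-- For integers `n` and `k` of different parity with `n − 2 > k > 2`, the graph `G_{n,k}`
satisfies `|DJ(G_{n,k})| = (n/2)·C(k+2, 3)`. -/
theorem Gnk_card_DJpairs (n k : ℕ) (hk : 2 < k) (hn : k + 2 < n) (hp : n % 2 ≠ k % 2) :
    ((DJpairs (Gnk n k)).card : ℝ) = n / 2 * ((k + 2).choose 3) :=
  Gnk_card_DJpairs_general n k hn hp

end
end

section
/- For integers n and k of different parity with n − 2 > k > 2, every edge uv of the graph G_{n,k} satisfies |DJ(uv)| ≤ k(k+1)/2. -/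
open scoped Classical

noncomputable section

lemma gonPt_apply0 (n i : ℕ) : gonPt n i 0 = Real.cos (2 * Real.pi * i / n) := by
  simp [gonPt]

lemma gonPt_apply1 (n i : ℕ) : gonPt n i 1 = Real.sin (2 * Real.pi * i / n) := by
  simp [gonPt]

lemma gonPt_eq_of (n a b : ℕ) (hc : Real.cos (2*Real.pi*a/n) = Real.cos (2*Real.pi*b/n))
    (hs : Real.sin (2*Real.pi*a/n) = Real.sin (2*Real.pi*b/n)) : gonPt n a = gonPt n b := by
  unfold gonPt
  rw [hc, hs]

lemma gonPt_add_n (n i : ℕ) (hn : 0 < n) : gonPt n (i + n) = gonPt n i := by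
  have hn' : (n:ℝ) ≠ 0 := Nat.cast_ne_zero.mpr hn.ne'
  have h : (2 * Real.pi * (i + n) / n : ℝ) = 2 * Real.pi * i / n + 2 * Real.pi := by
    field_simp
  apply gonPt_eq_of <;> push_cast <;> rw [h]
  · exact Real.cos_add_two_pi _
  · exact Real.sin_add_two_pi _

lemma gonPt_mod (n i : ℕ) (hn : 0 < n) : gonPt n i = gonPt n (i % n) := by
  induction i using Nat.strong_induction_on with
  | _ i ih =>
    rcases lt_or_ge i n with h | h
    · rw [Nat.mod_eq_of_lt h]
    · obtain ⟨j, rfl⟩ : ∃ j, i = j + n := ⟨i - n, by omega⟩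
      rw [gonPt_add_n n j hn, ih j (by omega), Nat.add_mod_right]

lemma gonPt_inj (n a b : ℕ) (ha : a < n) (hb : b < n) (h : gonPt n a = gonPt n b) : a = b := by
  have hn' : (n:ℝ) ≠ 0 := Nat.cast_ne_zero.mpr (by omega)
  have hc : Real.cos (2*Real.pi*a/n) = Real.cos (2*Real.pi*b/n) := by
    have := congrArg (fun p : Pt => p 0) h
    simpa [gonPt_apply0] using this
  have hs : Real.sin (2*Real.pi*a/n) = Real.sin (2*Real.pi*b/n) := by
    have := congrArg (fun p : Pt => p 1) h
    simpa [gonPt_apply1] using this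
  set x : ℝ := 2*Real.pi*a/n with hx
  set y : ℝ := 2*Real.pi*b/n with hy
  have hexp : Complex.exp (x * Complex.I) = Complex.exp (y * Complex.I) := by
    rw [Complex.exp_mul_I, Complex.exp_mul_I]
    rw [show (Complex.cos x) = (Real.cos x : ℂ) by simp [Complex.ofReal_cos],
        show (Complex.sin x) = (Real.sin x : ℂ) by simp [Complex.ofReal_sin],
        show (Complex.cos y) = (Real.cos y : ℂ) by simp [Complex.ofReal_cos],
        show (Complex.sin y) = (Real.sin y : ℂ) by simp [Complex.ofReal_sin], hc, hs]
  obtain ⟨m, hm⟩ := Complex.exp_eq_exp_iff_exists_int.mp hexp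
  have hm' : (x : ℂ) = y + m * (2 * Real.pi) := by
    have hI : (Complex.I : ℂ) ≠ 0 := Complex.I_ne_zero
    apply mul_right_cancel₀ hI
    linear_combination hm
  have hr : x = y + m * (2 * Real.pi) := by exact_mod_cast hm'
  have hpi := Real.pi_pos
  have hxr : 0 ≤ x ∧ x < 2 * Real.pi := by
    constructor
    · rw [hx]; positivity
    · rw [hx, div_lt_iff₀ (by positivity)]
      have : (a:ℝ) < n := by exact_mod_cast ha
      nlinarith
  have hyr : 0 ≤ y ∧ y < 2 * Real.pi := by
    constructor
    · rw [hy]; positivity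
    · rw [hy, div_lt_iff₀ (by positivity)]
      have : (b:ℝ) < n := by exact_mod_cast hb
      nlinarith
  have hm0 : m = 0 := by
    rcases lt_trichotomy m 0 with h' | h' | h'
    · have : (m:ℝ) ≤ -1 := by exact_mod_cast (by omega : m ≤ -1)
      nlinarith [hxr.1, hyr.2]
    · exact h'
    · have : (1:ℝ) ≤ m := by exact_mod_cast h'
      nlinarith [hxr.2, hyr.1]
  rw [hm0] at hr
  push_cast at hr
  simp only [zero_mul, add_zero] at hr
  have : (a:ℝ) = b := by
    have h2 : (2*Real.pi/(n:ℝ)) ≠ 0 := by positivity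
    exact mul_left_cancel₀ h2 (by rw [hx, hy] at hr; linear_combination hr)
  exact_mod_cast this


def creal (A B C : Pt) : ℝ :=
  (B 0 - A 0) * (C 1 - A 1) - (B 1 - A 1) * (C 0 - A 0)

lemma sin_triple (u v : ℝ) : Real.sin (2*v) + Real.sin (2*u) - Real.sin (2*(u+v))
    = 4 * Real.sin u * Real.sin v * Real.sin (u+v) := by
  have hu := Real.sin_sq_add_cos_sq u
  have hv := Real.sin_sq_add_cos_sq v
  rw [Real.sin_two_mul, Real.sin_two_mul, Real.sin_two_mul, Real.sin_add, Real.cos_add]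
  linear_combination (-(2*Real.sin v*Real.cos v)) * hu + (-(2*Real.sin u*Real.cos u)) * hv

lemma creal_formula (x y z : ℝ) :
    (Real.cos y - Real.cos x) * (Real.sin z - Real.sin x)
      - (Real.sin y - Real.sin x) * (Real.cos z - Real.cos x)
    = 4 * Real.sin ((y-x)/2) * Real.sin ((z-y)/2) * Real.sin ((z-x)/2) := by
  have h := sin_triple ((y-x)/2) ((z-y)/2)
  rw [show 2*((z-y)/2) = z - y by ring, show 2*((y-x)/2) = y - x by ring,
      show 2*((y-x)/2 + (z-y)/2) = z - x by ring,
      show (y-x)/2 + (z-y)/2 = (z-x)/2 by ring] at h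
  rw [Real.sin_sub z y, Real.sin_sub y x, Real.sin_sub z x] at h
  linear_combination h


lemma creal_gon (n i d r : ℕ) (hn : 0 < n) :
    creal (gonPt n i) (gonPt n (i+d)) (gonPt n (i+r)) =
      4 * Real.sin (Real.pi*d/n) * Real.sin (Real.pi*r/n - Real.pi*d/n) * Real.sin (Real.pi*r/n) := by
  have hn' : (n:ℝ) ≠ 0 := Nat.cast_ne_zero.mpr hn.ne'
  unfold creal
  rw [gonPt_apply0, gonPt_apply0, gonPt_apply0, gonPt_apply1, gonPt_apply1, gonPt_apply1,
      creal_formula]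
  rw [show ((2*Real.pi*(i+d:ℕ)/n - 2*Real.pi*i/n)/2 : ℝ) = Real.pi*d/n by push_cast; field_simp; ring,
      show ((2*Real.pi*(i+r:ℕ)/n - 2*Real.pi*(i+d:ℕ)/n)/2 : ℝ) = Real.pi*r/n - Real.pi*d/n by
        push_cast; field_simp; ring,
      show ((2*Real.pi*(i+r:ℕ)/n - 2*Real.pi*i/n)/2 : ℝ) = Real.pi*r/n by push_cast; field_simp; ring]

lemma sin_pos_nat (n m : ℕ) (h0 : 0 < m) (h1 : m < n) : 0 < Real.sin (Real.pi*m/n) := by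
  have hpi := Real.pi_pos
  apply Real.sin_pos_of_pos_of_lt_pi
  · have hm : (0:ℝ) < m := by exact_mod_cast h0
    have hn : (0:ℝ) < n := by exact_mod_cast h0.trans h1
    exact div_pos (by nlinarith) hn
  · rw [div_lt_iff₀ (by exact_mod_cast h0.trans h1)]
    have : (m:ℝ) < n := by exact_mod_cast h1
    nlinarith

lemma creal_gon_neg (n i d r : ℕ) (h0 : 0 < r) (h1 : r < d) (h2 : d < n) :
    creal (gonPt n i) (gonPt n (i+d)) (gonPt n (i+r)) < 0 := by
  have hn : 0 < n := by omega
  rw [creal_gon n i d r hn]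
  have s1 := sin_pos_nat n d (by omega) h2
  have s3 := sin_pos_nat n r h0 (by omega)
  have s2 : Real.sin (Real.pi*r/n - Real.pi*d/n) < 0 := by
    rw [show (Real.pi*r/n - Real.pi*d/n : ℝ) = -(Real.pi*(d-r:ℕ)/n) by
      push_cast [h1.le]; field_simp; ring, Real.sin_neg, neg_lt, neg_zero]
    exact sin_pos_nat n (d-r) (by omega) (by omega)
  nlinarith [mul_pos s1 s3]

lemma creal_gon_pos (n i d r : ℕ) (h0 : 0 < d) (h1 : d < r) (h2 : r < n) :
    0 < creal (gonPt n i) (gonPt n (i+d)) (gonPt n (i+r)) := by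
  have hn : 0 < n := by omega
  rw [creal_gon n i d r hn]
  have s1 := sin_pos_nat n d h0 (by omega)
  have s3 := sin_pos_nat n r (by omega) h2
  have s2 : 0 < Real.sin (Real.pi*r/n - Real.pi*d/n) := by
    rw [show (Real.pi*r/n - Real.pi*d/n : ℝ) = Real.pi*(r-d:ℕ)/n by
      push_cast [h1.le]; field_simp]
    exact sin_pos_nat n (r-d) (by omega) (by omega)
  nlinarith [mul_pos (mul_pos s1 s2) s3]

lemma cross_core (a0 a1 b0 b1 c0 c1 d0 d1 : ℝ)
    (h1 : (b0-a0)*(c1-a1)-(b1-a1)*(c0-a0) < 0)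
    (h2 : 0 < (b0-a0)*(d1-a1)-(b1-a1)*(d0-a0))
    (h3 : (d0-c0)*(b1-c1)-(d1-c1)*(b0-c0) < 0)
    (h4 : 0 < (d0-c0)*(a1-c1)-(d1-c1)*(a0-c0)) :
    ∃ t s : ℝ, 0 ≤ t ∧ t ≤ 1 ∧ 0 ≤ s ∧ s ≤ 1 ∧
      (1-t)*c0 + t*d0 = (1-s)*a0 + s*b0 ∧ (1-t)*c1 + t*d1 = (1-s)*a1 + s*b1 := by
  have hδ0 : (0:ℝ) < ((b0-a0)*(d1-a1)-(b1-a1)*(d0-a0)) - ((b0-a0)*(c1-a1)-(b1-a1)*(c0-a0)) := by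
    linarith
  set δ : ℝ := ((b0-a0)*(d1-a1)-(b1-a1)*(d0-a0)) - ((b0-a0)*(c1-a1)-(b1-a1)*(c0-a0)) with hδ
  have hne : δ ≠ 0 := hδ0.ne'
  refine ⟨-((b0-a0)*(c1-a1)-(b1-a1)*(c0-a0))/δ, ((d0-c0)*(a1-c1)-(d1-c1)*(a0-c0))/δ,
    div_nonneg (by linarith) hδ0.le, ?_, div_nonneg h4.le hδ0.le, ?_, ?_, ?_⟩
  · rw [div_le_one hδ0]; linarith
  · rw [div_le_one hδ0]
    have : δ = ((d0-c0)*(a1-c1)-(d1-c1)*(a0-c0)) - ((d0-c0)*(b1-c1)-(d1-c1)*(b0-c0)) := by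
      rw [hδ]; ring
    rw [this]; linarith
  · field_simp
    ring
  · field_simp
    ring

lemma seg_cross (A B C D : Pt) (h1 : creal A B C < 0) (h2 : 0 < creal A B D)
    (h3 : creal C D B < 0) (h4 : 0 < creal C D A) :
    (segment ℝ A B ∩ segment ℝ C D).Nonempty := by
  obtain ⟨t, s, ht0, ht1, hs0, hs1, he0, he1⟩ :=
    cross_core (A 0) (A 1) (B 0) (B 1) (C 0) (C 1) (D 0) (D 1) h1 h2 h3 h4
  refine ⟨(1-s) • A + s • B, ⟨1-s, s, by linarith, hs0, by ring, rfl⟩,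
    ⟨1-t, t, by linarith, ht0, by ring, ?_⟩⟩
  ext j
  simp only [PiLp.add_apply, PiLp.smul_apply, smul_eq_mul]
  fin_cases j
  · exact he0
  · exact he1

lemma gon_crossing (n i p d q : ℕ) (h1 : 0 < p) (h2 : p < d) (h3 : d < q) (h4 : q < n) :
    (segment ℝ (gonPt n i) (gonPt n (i+d)) ∩
      segment ℝ (gonPt n (i+p)) (gonPt n (i+q))).Nonempty := by
  apply seg_cross
  · exact creal_gon_neg n i d p h1 h2 (by omega)
  · exact creal_gon_pos n i d q (by omega) h3 h4
  · have e1 : gonPt n (i+q) = gonPt n ((i+p) + (q-p)) := by rw [show (i+p)+(q-p) = i+q by omega]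
    have e2 : gonPt n (i+d) = gonPt n ((i+p) + (d-p)) := by rw [show (i+p)+(d-p) = i+d by omega]
    rw [e1, e2]
    exact creal_gon_neg n (i+p) (q-p) (d-p) (by omega) (by omega) (by omega)
  · have e1 : gonPt n (i+q) = gonPt n ((i+p) + (q-p)) := by rw [show (i+p)+(q-p) = i+q by omega]
    have e3 : gonPt n i = gonPt n ((i+p) + (n-p)) := by
      rw [show (i+p)+(n-p) = i + n by omega, gonPt_add_n n i (by omega)]
    rw [e1, e3]
    exact creal_gon_pos n (i+p) (q-p) (n-p) (by omega) (by omega) (by omega)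

lemma edgeSeg_mk (u v : Pt) : edgeSeg s(u,v) = segment ℝ u v := rfl

lemma not_disjoint (u v w z x : Pt) (h1 : x ∈ segment ℝ u v) (h2 : x ∈ segment ℝ w z) :
    ¬ EdgesDisjoint s(u,v) s(w,z) := by
  intro h
  have hx : x ∈ edgeSeg s(u,v) ∩ edgeSeg s(w,z) := ⟨h1, h2⟩
  rw [EdgesDisjoint] at h
  rw [h] at hx
  exact hx

lemma mod2' (y i n : ℕ) (hn : 0 < n) (hy : y < n) (hi : i < n) :
    (y + n - i) % n < n ∧ ((y + n - i) % n + i = y ∨ (y + n - i) % n + i = y + n) := by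
  refine ⟨Nat.mod_lt _ hn, ?_⟩
  rcases lt_or_ge y i with h | h
  · right
    rw [Nat.mod_eq_of_lt (by omega)]
    omega
  · left
    rw [Nat.mod_eq_sub_mod (by omega), Nat.mod_eq_of_lt (by omega)]
    omega

lemma unrot (n i r a : ℕ) (hn : 0 < n) (h : r + i = a ∨ r + i = a + n) :
    gonPt n (i + r) = gonPt n a := by
  rcases h with h | h
  · rw [show i + r = a by omega]
  · rw [show i + r = a + n by omega, gonPt_add_n n a hn]

def idx (n : ℕ) (u : Pt) : ℕ :=
  if h : ∃ a, a < n ∧ gonPt n a = u then h.choose else 0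

lemma idx_gonPt (n a : ℕ) (ha : a < n) : idx n (gonPt n a) = a := by
  unfold idx
  have h : ∃ b, b < n ∧ gonPt n b = gonPt n a := ⟨a, ha, rfl⟩
  rw [dif_pos h]
  exact gonPt_inj n _ a h.choose_spec.1 ha h.choose_spec.2

def rho (n i : ℕ) (u : Pt) : ℕ := (idx n u + n - i) % n

def phi (n i : ℕ) : Sym2 Pt → ℕ × ℕ :=
  Sym2.lift ⟨fun u v => (min (rho n i u) (rho n i v), max (rho n i u) (rho n i v)), by
    intro u v
    simp [min_comm, max_comm]⟩

lemma phi_mk (n i : ℕ) (u v : Pt) :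
    phi n i s(u,v) = (min (rho n i u) (rho n i v), max (rho n i u) (rho n i v)) := rfl

lemma card_tri (k : ℕ) :
    (((Finset.range k) ×ˢ (Finset.range k)).filter (fun pq => pq.1 ≤ pq.2)).card
      = k*(k+1)/2 := by
  classical
  have heq : ((Finset.range k) ×ˢ (Finset.range k)).filter (fun pq => pq.1 ≤ pq.2)
      = (Finset.range k).biUnion (fun y => (Finset.range (y+1)).image (fun x => (x, y))) := by
    ext ⟨x, y⟩
    simp only [Finset.mem_filter, Finset.mem_product, Finset.mem_range, Finset.mem_biUnion,
      Finset.mem_image, Prod.mk.injEq]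
    constructor
    · rintro ⟨⟨hx, hy⟩, hxy⟩
      exact ⟨y, hy, x, by omega, rfl, rfl⟩
    · rintro ⟨y', hy', x', hx', rfl, rfl⟩
      omega
  rw [heq, Finset.card_biUnion]
  · have h1 : ∀ y ∈ Finset.range k, ((Finset.range (y+1)).image (fun x => (x, y))).card = y + 1 := by
      intro y _
      rw [Finset.card_image_of_injective _ (fun x1 x2 h => (Prod.mk.injEq _ _ _ _).mp h |>.1),
        Finset.card_range]
    rw [Finset.sum_congr rfl h1]
    have h2 : ∑ y ∈ Finset.range k, (y + 1) = ∑ y ∈ Finset.range (k+1), y := by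
      rw [Finset.sum_range_succ' (fun y => y) k]
      simp
    rw [h2, Finset.sum_range_id]
    simp [Nat.mul_comm]
  · intro y1 _ y2 _ hne
    simp only [Finset.disjoint_left, Finset.mem_image, Finset.mem_range]
    rintro ⟨x, y⟩ ⟨x1, _, h1⟩ ⟨x2, _, h2⟩
    rw [Prod.mk.injEq] at h1 h2
    exact hne (h1.2.trans h2.2.symm)

/-- For integers `n` and `k` of different parity with `n − 2 > k > 2`, every edge `uv` of the
graph `G_{n,k}` satisfies `|DJ(uv)| ≤ k(k+1)/2`. -/
theorem Gnk_DJedge_bound (n k : ℕ) (hk : 2 < k) (hn : k + 2 < n) (hp : n % 2 ≠ k % 2) :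
    ∀ e ∈ (Gnk n k).edges, (DJedge (Gnk n k) e).card ≤ k * (k + 1) / 2 := by
  classical
  intro e he
  simp only [Gnk, Finset.mem_image, Finset.mem_filter, Finset.mem_product,
    Finset.mem_range] at he
  obtain ⟨⟨i, j⟩, ⟨⟨hi, hj⟩, hd1, hd2⟩, rfl⟩ := he
  set g : ℕ := (n - k - 1)/2 with hg
  have hnpos : 0 < n := by omega
  have hd1' : g ≤ (j + n - i) % n := hd1
  have hd2' : (j + n - i) % n ≤ (n + k + 1)/2 := hd2
  clear hd1 hd2
  obtain ⟨d, hdE, hdn, hdR⟩ : ∃ x, (j + n - i) % n = x ∧ x < n ∧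
      (x + i = j ∨ x + i = j + n) :=
    ⟨_, rfl, (mod2' j i n hnpos hj hi).1, (mod2' j i n hnpos hj hi).2⟩
  rw [hdE] at hd1' hd2'
  have hgd : g ≤ d := hd1'
  have hdg : d ≤ n - g := by omega
  have hg1 : 1 ≤ g := by omega
  have hkg : k + 1 = n - 2*g := by omega
  have hij : gonPt n (i + d) = gonPt n j := unrot n i d j hnpos hdR
  set T : Finset (ℕ × ℕ) := ((Finset.range n) ×ˢ (Finset.range n)).filter
      (fun pq => 0 < pq.1 ∧ pq.1 < pq.2 ∧ pq.1 + g ≤ pq.2 ∧ (pq.2 < d ∨ d < pq.1)) with hT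
  have main : ∀ f ∈ DJedge (Gnk n k) s(gonPt n i, gonPt n j), phi n i f ∈ T ∧
      f = s(gonPt n (i + (phi n i f).1), gonPt n (i + (phi n i f).2)) := by
    intro f hf
    rw [DJedge, Finset.mem_filter] at hf
    obtain ⟨hfe, hfd⟩ := hf
    simp only [Gnk, Finset.mem_image, Finset.mem_filter, Finset.mem_product,
      Finset.mem_range] at hfe
    obtain ⟨⟨a, b⟩, ⟨⟨ha, hb⟩, hab1, hab2⟩, rfl⟩ := hfe
    have hab1' : g ≤ (b + n - a) % n := hab1
    have hab2' : (b + n - a) % n ≤ (n + k + 1)/2 := hab2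
    clear hab1 hab2
    obtain ⟨ra, hraE, hran, hraR⟩ : ∃ x, (a + n - i) % n = x ∧ x < n ∧
        (x + i = a ∨ x + i = a + n) :=
      ⟨_, rfl, (mod2' a i n hnpos ha hi).1, (mod2' a i n hnpos ha hi).2⟩
    obtain ⟨rb, hrbE, hrbn, hrbR⟩ : ∃ x, (b + n - i) % n = x ∧ x < n ∧
        (x + i = b ∨ x + i = b + n) :=
      ⟨_, rfl, (mod2' b i n hnpos hb hi).1, (mod2' b i n hnpos hb hi).2⟩
    obtain ⟨rg, hrgE, hrgn, hrgR⟩ : ∃ x, (b + n - a) % n = x ∧ x < n ∧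
        (x + a = b ∨ x + a = b + n) :=
      ⟨_, rfl, (mod2' b a n hnpos hb ha).1, (mod2' b a n hnpos hb ha).2⟩
    rw [hrgE] at hab1' hab2'
    have hra : rho n i (gonPt n a) = ra := by rw [rho, idx_gonPt n a ha, hraE]
    have hrb : rho n i (gonPt n b) = rb := by rw [rho, idx_gonPt n b hb, hrbE]
    have hia : gonPt n (i + ra) = gonPt n a := unrot n i ra a hnpos hraR
    have hib : gonPt n (i + rb) = gonPt n b := unrot n i rb b hnpos hrbR
    have hne : ra ≠ rb := by omega
    -- ra, rb avoid 0 and d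
    have hra0 : ra ≠ 0 := by
      intro h0
      have hai : a = i := by omega
      refine not_disjoint _ _ _ _ (gonPt n i) (left_mem_segment ℝ _ _) ?_ hfd
      rw [← hai]
      exact left_mem_segment ℝ _ _
    have hrb0 : rb ≠ 0 := by
      intro h0
      have hbi : b = i := by omega
      refine not_disjoint _ _ _ _ (gonPt n i) (left_mem_segment ℝ _ _) ?_ hfd
      rw [← hbi]
      exact right_mem_segment ℝ _ _
    have hrad : ra ≠ d := by
      intro h0
      have haj : a = j := by omega
      refine not_disjoint _ _ _ _ (gonPt n j) (right_mem_segment ℝ _ _) ?_ hfd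
      rw [← haj]
      exact left_mem_segment ℝ _ _
    have hrbd : rb ≠ d := by
      intro h0
      have hbj : b = j := by omega
      refine not_disjoint _ _ _ _ (gonPt n j) (right_mem_segment ℝ _ _) ?_ hfd
      rw [← hbj]
      exact right_mem_segment ℝ _ _
    -- no crossing
    have harc : ¬ (min ra rb < d ∧ d < max ra rb) := by
      rintro ⟨hc1, hc2⟩
      obtain ⟨x, hx1, hx2⟩ := gon_crossing n i (min ra rb) d (max ra rb)
        (by omega) hc1 hc2 (by omega)
      rw [hij] at hx1
      have hx2' : x ∈ segment ℝ (gonPt n a) (gonPt n b) := by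
        rcases le_total ra rb with hle | hle
        · rw [min_eq_left hle, max_eq_right hle, hia, hib] at hx2
          exact hx2
        · rw [min_eq_right hle, max_eq_left hle, hib, hia] at hx2
          rw [segment_symm]
          exact hx2
      exact not_disjoint _ _ _ _ x hx1 hx2' hfd
    constructor
    · rw [phi, Sym2.lift_mk]
      simp only [hra, hrb]
      simp only [hT, Finset.mem_filter, Finset.mem_product, Finset.mem_range]
      omega
    · rw [phi, Sym2.lift_mk]
      simp only [hra, hrb]
      rcases le_total ra rb with hle | hle
      · rw [min_eq_left hle, max_eq_right hle, hia, hib]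
      · rw [min_eq_right hle, max_eq_left hle, hib, hia, Sym2.eq_swap]
  have step1 : (DJedge (Gnk n k) s(gonPt n i, gonPt n j)).card ≤ T.card := by
    apply Finset.card_le_card_of_injOn (phi n i)
    · intro f hf
      exact (main f hf).1
    · intro f1 h1 f2 h2 heq
      rw [(main f1 h1).2, (main f2 h2).2, heq]
  have step2 : T.card ≤ k * (k + 1) / 2 := by
    rw [← card_tri k]
    apply Finset.card_le_card_of_injOn
      (fun pq => if pq.2 < d then (pq.1 - 1, pq.2 - g - 1)
        else (pq.1 - d - 1, pq.2 - d - g - 1 + (d - g - 1)))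
    · rintro ⟨p, q⟩ hpq
      simp only [hT, Finset.mem_coe, Finset.mem_filter, Finset.mem_product, Finset.mem_range] at hpq
      simp only [Finset.mem_coe, Finset.mem_filter, Finset.mem_product, Finset.mem_range]
      split_ifs with hcase <;> omega
    · rintro ⟨p1, q1⟩ h1 ⟨p2, q2⟩ h2 heq
      simp only [Finset.coe_filter, Set.mem_setOf_eq, Finset.mem_product,
        Finset.mem_range, hT, Finset.mem_coe, Finset.mem_filter] at h1 h2
      simp only [Prod.mk.injEq] at heq ⊢
      split_ifs at heq with hc1 hc2 hc2 <;> rw [Prod.mk.injEq] at heq <;> omega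
  exact step1.trans step2

end
end
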